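/- arXiv:2106.01888 — 4 statements merged into one kernel-verified Lean document; each statement's English description precedes it below -/
import Mathlib

section
/- Let b : G × Ξ → ℂ be an almost periodic symbol with countable frequency set Θ (symmetric under inversion and containing the identity), and define for γ ∈ ℝ, l ≥ 0 the norm ⦀b⦀_l^{(γ)} := Σ_{θ∈Θ} ⟨θ⟩^l sup_{ξ∈Ξ} ⟨ξ⟩^{−γ} |b_θ(ξ)|. Then the operator B = Op(b), defined by B e_ξ = Σ_{θ∈Θ} b_θ(ξ) e_{θ▷ξ}, extends uniquely to a bounded linear operator H^β(Ξ) → H^{β−γ}(Ξ) with operator norm at most ⦀b⦀_{|β−γ|}^{(γ)}. -/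
/-! For `s = β - γ`, the Peetre-type bound `⟨θ ▷ ξ⟩^s ≤ ⟨θ⟩^|s| ⟨ξ⟩^s` (the group weight
controls how far `θ` moves the weight) dominates `⟨η⟩^s |Bx(η)|` by `Σ_θ a_θ y(θ⁻¹ ▷ η)`, where
`a_θ = ⟨θ⟩^|s| sup_ξ ⟨ξ⟩^{-γ} |b_θ(ξ)|` and `y = ⟨·⟩^β |x|`. Weighted Cauchy–Schwarz in `θ` and
Fubini, each `θ` acting as a permutation of `Ξ`, give Young's inequality
`‖Σ_θ a_θ y(θ⁻¹ ▷ ·)‖₂ ≤ ‖a‖₁ ‖y‖₂`, and `‖a‖₁ = ⦀b⦀_{|s|}^{(γ)}`. -/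

noncomputable section

open scoped Classical

variable {G Ξ : Type*}

/-- The symbol norm `⦀b⦀_l^{(γ)} = Σ_θ ⟨θ⟩^l sup_ξ ⟨ξ⟩^{−γ} |b_θ(ξ)|`. -/
def snorm (w : Ξ → ℝ) (wG : G → ℝ) (b : G → Ξ → ℂ) (γ l : ℝ) : ℝ :=
  ∑' θ : G, wG θ ^ l * ⨆ ξ : Ξ, w ξ ^ (-γ) * ‖b θ ξ‖

/-- `b` is a symbol of order `γ`: all symbol norms `⦀b⦀_l^{(γ)}`, `l ≥ 0`, are finite. -/
def HasOrder (w : Ξ → ℝ) (wG : G → ℝ) (b : G → Ξ → ℂ) (γ : ℝ) : Prop :=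
  (∀ θ : G, BddAbove (Set.range fun ξ : Ξ => w ξ ^ (-γ) * ‖b θ ξ‖)) ∧
    ∀ l : ℝ, 0 ≤ l → Summable fun θ : G => wG θ ^ l * ⨆ ξ : Ξ, w ξ ^ (-γ) * ‖b θ ξ‖

/-- An almost periodic symbol with (countable, symmetric, unital) frequency set `Θ`. -/
def IsAPSymbol [Group G] (b : G → Ξ → ℂ) (Θ : Set G) : Prop :=
  Θ.Countable ∧ (1 : G) ∈ Θ ∧ (∀ θ ∈ Θ, θ⁻¹ ∈ Θ) ∧ ∀ g ∉ Θ, ∀ ξ : Ξ, b g ξ = 0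

/-- The action of the almost periodic operator `Op(b)`, `B e_ξ = Σ_θ b_θ(ξ) e_{θ▷ξ}`,
on a vector `x`, written out in coordinates. -/
def opApply [Group G] [MulAction G Ξ] (b : G → Ξ → ℂ) (x : Ξ → ℂ) : Ξ → ℂ :=
  fun η => ∑' θ : G, b θ (θ⁻¹ • η) * x (θ⁻¹ • η)

/-- The composed symbol `(a∘b)_θ(ξ) = Σ_{θ_a θ_b = θ} a_{θ_a}(θ_b ▷ ξ) b_{θ_b}(ξ)`. -/
def compSymb [Group G] [MulAction G Ξ] (a b : G → Ξ → ℂ) : G → Ξ → ℂ :=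
  fun θ ξ => ∑' h : G, a (θ * h⁻¹) (h • ξ) * b h ξ

/-- The commutator symbol `ad(A,B) = i(AB − BA)`. -/
def adSymb [Group G] [MulAction G Ξ] (a b : G → Ξ → ℂ) : G → Ξ → ℂ :=
  fun θ ξ => Complex.I * (compSymb a b θ ξ - compSymb b a θ ξ)

open Real

lemma summable_and_sq_tsum_mul_le {ι : Type*} {u v : ι → ℝ} (hu : ∀ i, 0 ≤ u i)
    (hv : ∀ i, 0 ≤ v i) (hsu : Summable u) (hsv : Summable fun i => u i * v i ^ 2) :
    (Summable fun i => u i * v i) ∧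
      (∑' i, u i * v i) ^ 2 ≤ (∑' i, u i) * ∑' i, u i * v i ^ 2 := by
  have hsq : ∀ i, √(u i) * (√(u i) * v i) = u i * v i := fun i => by
    rw [← mul_assoc, mul_self_sqrt (hu i)]
  obtain ⟨hs, hle⟩ := summable_and_inner_le_Lp_mul_Lq_tsum_of_nonneg HolderConjugate.two_two
    (f := fun i => √(u i)) (g := fun i => √(u i) * v i) (fun i => sqrt_nonneg _)
    (fun i => mul_nonneg (sqrt_nonneg _) (hv i))
    (by simpa only [rpow_two, sq_sqrt (hu _)] using hsu)
    (by simpa only [rpow_two, mul_pow, sq_sqrt (hu _)] using hsv)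
  simp only [hsq, rpow_two, mul_pow, sq_sqrt (hu _)] at hs hle
  refine ⟨hs, ?_⟩
  have hA : 0 ≤ ∑' i, u i := tsum_nonneg hu
  have hB : 0 ≤ ∑' i, u i * v i ^ 2 := tsum_nonneg fun i => by have := hu i; positivity
  calc (∑' i, u i * v i) ^ 2
      ≤ ((∑' i, u i) ^ (1 / 2 : ℝ) * (∑' i, u i * v i ^ 2) ^ (1 / 2 : ℝ)) ^ 2 :=
        pow_le_pow_left₀ (tsum_nonneg fun i => mul_nonneg (hu i) (hv i)) hle 2
    _ = (∑' i, u i) * ∑' i, u i * v i ^ 2 := by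
        rw [mul_pow, ← sqrt_eq_rpow, ← sqrt_eq_rpow, sq_sqrt hA, sq_sqrt hB]

lemma rpow_le_rpow_abs_mul_rpow {p q r : ℝ} (hp : 0 < p) (hq : 0 < q)
    (hpq : p ≤ r * q) (hqp : q ≤ r * p) (s : ℝ) : p ^ s ≤ r ^ |s| * q ^ s := by
  have hr : 0 < r := pos_of_mul_pos_left (hp.trans_le hpq) hq.le
  rcases le_or_gt 0 s with hs | hs
  · rw [abs_of_nonneg hs, ← mul_rpow hr.le hq.le]
    exact rpow_le_rpow hp.le hpq hs
  · have hinv : p⁻¹ ≤ r * q⁻¹ := by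
      rw [inv_le_iff_one_le_mul₀ hp]
      calc (1 : ℝ) = q * q⁻¹ := (mul_inv_cancel₀ hq.ne').symm
        _ ≤ r * p * q⁻¹ := by gcongr
        _ = r * q⁻¹ * p := by ring
    have := rpow_le_rpow (inv_nonneg.2 hp.le) hinv (neg_nonneg.2 hs.le)
    rw [abs_of_neg hs]
    rwa [mul_rpow hr.le (inv_nonneg.2 hq.le), inv_rpow hp.le, inv_rpow hq.le, ← rpow_neg hp.le,
      ← rpow_neg hq.le, neg_neg] at this

lemma rpow_two_mul_eq_sq {t : ℝ} (ht : 0 ≤ t) (s : ℝ) : t ^ (2 * s) = (t ^ s) ^ 2 := by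
  rw [← rpow_mul_natCast ht, mul_comm]
  norm_num

lemma le_mul_of_abs_sub_le {p q D : ℝ} (hq : 1 ≤ q) (h : |p - q| ≤ D) : p ≤ (1 + D) * q := by
  have := (abs_le.1 h).2
  nlinarith [abs_nonneg (p - q)]

lemma norm_le_iSup_mul_rpow {w : Ξ → ℝ} {f : Ξ → ℂ} {γ : ℝ}
    (hbdd : BddAbove (Set.range fun ξ => w ξ ^ (-γ) * ‖f ξ‖)) {ξ : Ξ} (hw : 0 < w ξ) :
    ‖f ξ‖ ≤ (⨆ ξ, w ξ ^ (-γ) * ‖f ξ‖) * w ξ ^ γ := by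
  have h := le_ciSup hbdd ξ
  rwa [rpow_neg hw.le, inv_mul_le_iff₀ (rpow_pos_of_pos hw γ), mul_comm] at h

section Weight

variable [SMul G Ξ] {w : Ξ → ℝ} {wG : G → ℝ}

lemma rpow_weight_smul_le (hw : ∀ ξ, 1 ≤ w ξ) (hD : ∀ θ ξ, |w (θ • ξ) - w ξ| ≤ wG θ - 1)
    (s : ℝ) (θ : G) (ξ : Ξ) : w (θ • ξ) ^ s ≤ wG θ ^ |s| * w ξ ^ s := by
  have h₁ := le_mul_of_abs_sub_le (hw ξ) (hD θ ξ)
  have h₂ := le_mul_of_abs_sub_le (hw (θ • ξ)) ((abs_sub_comm _ _).trans_le (hD θ ξ))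
  rw [add_sub_cancel] at h₁ h₂
  exact rpow_le_rpow_abs_mul_rpow (by linarith [hw (θ • ξ)]) (by linarith [hw ξ]) h₁ h₂ s

lemma rpow_smul_mul_norm_le (hw : ∀ ξ, 1 ≤ w ξ) (hD : ∀ θ ξ, |w (θ • ξ) - w ξ| ≤ wG θ - 1)
    {b : G → Ξ → ℂ} {γ : ℝ} (hb : ∀ θ, BddAbove (Set.range fun ξ => w ξ ^ (-γ) * ‖b θ ξ‖))
    (β : ℝ) (x : Ξ → ℂ) (θ : G) (ξ : Ξ) :
    w (θ • ξ) ^ (β - γ) * ‖b θ ξ * x ξ‖ ≤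
      (wG θ ^ |β - γ| * ⨆ ξ, w ξ ^ (-γ) * ‖b θ ξ‖) * (w ξ ^ β * ‖x ξ‖) := by
  have hw0 : 0 < w ξ := one_pos.trans_le (hw ξ)
  have hwG0 : 0 ≤ wG θ := by linarith [abs_nonneg (w (θ • ξ) - w ξ), hD θ ξ]
  calc w (θ • ξ) ^ (β - γ) * ‖b θ ξ * x ξ‖
      ≤ (wG θ ^ |β - γ| * w ξ ^ (β - γ)) * (((⨆ ξ, w ξ ^ (-γ) * ‖b θ ξ‖) * w ξ ^ γ) * ‖x ξ‖) := by
        rw [norm_mul]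
        gcongr
        · exact rpow_weight_smul_le hw hD _ θ ξ
        · exact norm_le_iSup_mul_rpow (hb θ) hw0
    _ = (wG θ ^ |β - γ| * ⨆ ξ, w ξ ^ (-γ) * ‖b θ ξ‖) * ((w ξ ^ (β - γ) * w ξ ^ γ) * ‖x ξ‖) := by
        ring
    _ = _ := by rw [← rpow_add hw0, sub_add_cancel]

end Weight

section Action

variable [Group G] [MulAction G Ξ]

lemma hasSum_tsum_mul_inv_smul {a : G → ℝ} {f : Ξ → ℝ} (ha0 : ∀ θ, 0 ≤ a θ)
    (hf0 : ∀ ξ, 0 ≤ f ξ) (ha : Summable a) (hf : Summable f) :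
    (∀ η, Summable fun θ => a θ * f (θ⁻¹ • η)) ∧
      HasSum (fun η => ∑' θ, a θ * f (θ⁻¹ • η)) ((∑' θ, a θ) * ∑' ξ, f ξ) := by
  let shear : G × Ξ ≃ G × Ξ := Equiv.prodShear (Equiv.refl G) fun θ => MulAction.toPerm θ⁻¹
  have hprod : HasSum (fun p : G × Ξ => a p.1 * f p.2) ((∑' θ, a θ) * ∑' ξ, f ξ) :=
    ha.hasSum.mul hf.hasSum (ha.mul_of_nonneg hf ha0 hf0)
  have hsheared : HasSum (fun p : Ξ × G => a p.2 * f (p.2⁻¹ • p.1)) ((∑' θ, a θ) * ∑' ξ, f ξ) :=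
    (Equiv.prodComm Ξ G).hasSum_iff.2 (shear.hasSum_iff.2 hprod)
  have hfiber : ∀ η, Summable fun θ => a θ * f (θ⁻¹ • η) := hsheared.summable.prod_factor
  exact ⟨hfiber, hsheared.prod_fiberwise fun η => (hfiber η).hasSum⟩

lemma summable_and_tsum_sq_tsum_mul_inv_smul_le {a : G → ℝ} {y : Ξ → ℝ} (ha0 : ∀ θ, 0 ≤ a θ)
    (hy0 : ∀ ξ, 0 ≤ y ξ) (ha : Summable a) (hy : Summable fun ξ => y ξ ^ 2) :
    (∀ η, Summable fun θ => a θ * y (θ⁻¹ • η)) ∧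
      (Summable fun η => (∑' θ, a θ * y (θ⁻¹ • η)) ^ 2) ∧
      ∑' η, (∑' θ, a θ * y (θ⁻¹ • η)) ^ 2 ≤ (∑' θ, a θ) ^ 2 * ∑' ξ, y ξ ^ 2 := by
  obtain ⟨hfiber, hconv⟩ := hasSum_tsum_mul_inv_smul ha0 (fun ξ => sq_nonneg (y ξ)) ha hy
  have hcs η := summable_and_sq_tsum_mul_le ha0 (fun θ => hy0 (θ⁻¹ • η)) ha (hfiber η)
  have hdom := hconv.summable.mul_left (∑' θ, a θ)
  have hsq := hdom.of_nonneg_of_le (fun η => sq_nonneg _) fun η => (hcs η).2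
  refine ⟨fun η => (hcs η).1, hsq, ?_⟩
  calc ∑' η, (∑' θ, a θ * y (θ⁻¹ • η)) ^ 2
      ≤ ∑' η, (∑' θ, a θ) * ∑' θ, a θ * y (θ⁻¹ • η) ^ 2 :=
        hsq.tsum_le_tsum (fun η => (hcs η).2) hdom
    _ = (∑' θ, a θ) ^ 2 * ∑' ξ, y ξ ^ 2 := by rw [tsum_mul_left, hconv.tsum_eq, sq, mul_assoc]

lemma rpow_mul_norm_opApply_le {w : Ξ → ℝ} {s : ℝ} {b : G → Ξ → ℂ} {x : Ξ → ℂ}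
    {k : G → Ξ → ℝ} {η : Ξ} (hw : 0 < w η)
    (hk : ∀ θ ξ, w (θ • ξ) ^ s * ‖b θ ξ * x ξ‖ ≤ k θ ξ)
    (hsk : Summable fun θ => k θ (θ⁻¹ • η)) :
    w η ^ s * ‖opApply b x η‖ ≤ ∑' θ, k θ (θ⁻¹ • η) := by
  have hk' θ : w η ^ s * ‖b θ (θ⁻¹ • η) * x (θ⁻¹ • η)‖ ≤ k θ (θ⁻¹ • η) := by
    simpa only [smul_inv_smul] using hk θ (θ⁻¹ • η)
  have hws : 0 < w η ^ s := rpow_pos_of_pos hw s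
  have hsum : Summable fun θ => w η ^ s * ‖b θ (θ⁻¹ • η) * x (θ⁻¹ • η)‖ :=
    hsk.of_nonneg_of_le (fun θ => by positivity) hk'
  calc w η ^ s * ‖opApply b x η‖
      ≤ w η ^ s * ∑' θ, ‖b θ (θ⁻¹ • η) * x (θ⁻¹ • η)‖ :=
        mul_le_mul_of_nonneg_left
          (norm_tsum_le_tsum_norm ((summable_mul_left_iff hws.ne').1 hsum)) hws.le
    _ = ∑' θ, w η ^ s * ‖b θ (θ⁻¹ • η) * x (θ⁻¹ • η)‖ := tsum_mul_left.symm
    _ ≤ ∑' θ, k θ (θ⁻¹ • η) := hsum.tsum_le_tsum hk' hsk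

end Action

theorem stmt4_general [Group G] [MulAction G Ξ]
    (w : Ξ → ℝ) (hw : ∀ ξ, 1 ≤ w ξ)
    (wG : G → ℝ) (hwG : ∀ g : G, wG g = 1 + ⨆ ξ : Ξ, |w (g • ξ) - w ξ|)
    (hbdd : ∀ g : G, BddAbove (Set.range fun ξ : Ξ => |w (g • ξ) - w ξ|))
    (b : G → Ξ → ℂ)
    (γ β : ℝ) (hord : HasOrder w wG b γ)
    (x : Ξ → ℂ) (hx : Summable fun ξ : Ξ => w ξ ^ (2 * β) * ‖x ξ‖ ^ 2) :
    Summable (fun η : Ξ => w η ^ (2 * (β - γ)) * ‖opApply b x η‖ ^ 2) ∧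
      ∑' η : Ξ, w η ^ (2 * (β - γ)) * ‖opApply b x η‖ ^ 2 ≤
        snorm w wG b γ |β - γ| ^ 2 * ∑' ξ : Ξ, w ξ ^ (2 * β) * ‖x ξ‖ ^ 2 := by
  obtain ⟨hb, hsumm⟩ := hord
  have hw0 ξ : 0 < w ξ := one_pos.trans_le (hw ξ)
  have hD θ ξ : |w (θ • ξ) - w ξ| ≤ wG θ - 1 := by
    rw [hwG, add_sub_cancel_left]
    exact le_ciSup (hbdd θ) ξ
  set a : G → ℝ := fun θ => wG θ ^ |β - γ| * ⨆ ξ, w ξ ^ (-γ) * ‖b θ ξ‖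
  set y : Ξ → ℝ := fun ξ => w ξ ^ β * ‖x ξ‖
  have ha0 θ : 0 ≤ a θ := by
    have : 0 ≤ wG θ := by
      rw [hwG]; linarith [iSup_nonneg fun ξ => abs_nonneg (w (θ • ξ) - w ξ)]
    exact mul_nonneg (rpow_nonneg this _)
      (iSup_nonneg fun ξ => mul_nonneg (rpow_nonneg (hw0 ξ).le _) (norm_nonneg _))
  have hy0 ξ : 0 ≤ y ξ := mul_nonneg (rpow_nonneg (hw0 ξ).le _) (norm_nonneg _)
  have hy ξ : y ξ ^ 2 = w ξ ^ (2 * β) * ‖x ξ‖ ^ 2 := by rw [mul_pow, rpow_two_mul_eq_sq (hw0 ξ).le]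
  obtain ⟨hfiber, hsq, hle⟩ := summable_and_tsum_sq_tsum_mul_inv_smul_le ha0 hy0
    (hsumm _ (abs_nonneg _)) (by simpa only [hy] using hx)
  have hpt η : w η ^ (2 * (β - γ)) * ‖opApply b x η‖ ^ 2 ≤ (∑' θ, a θ * y (θ⁻¹ • η)) ^ 2 := by
    rw [rpow_two_mul_eq_sq (hw0 η).le, ← mul_pow]
    exact pow_le_pow_left₀ (mul_nonneg (rpow_nonneg (hw0 η).le _) (norm_nonneg _))
      (rpow_mul_norm_opApply_le (hw0 η) (rpow_smul_mul_norm_le hw hD hb β x) (hfiber η)) 2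
  have hsum := hsq.of_nonneg_of_le
    (fun η => mul_nonneg (rpow_nonneg (hw0 η).le _) (sq_nonneg _)) hpt
  simp only [hy] at hle
  exact ⟨hsum, (hsum.tsum_le_tsum hpt hsq).trans hle⟩

/-- An almost periodic operator `B = Op(b)` with finite symbol norms
extends (uniquely, by density) to a bounded operator `H^β(Ξ) → H^{β−γ}(Ξ)` with
norm at most `⦀b⦀_{|β−γ|}^{(γ)}`: in coordinates, for every `x ∈ H^β(Ξ)` the image
`Bx` lies in `H^{β−γ}(Ξ)` with `‖Bx‖_{H^{β−γ}} ≤ ⦀b⦀_{|β−γ|}^{(γ)} ‖x‖_{H^β}`. -/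
theorem stmt4 [Nonempty Ξ] [Group G] [MulAction G Ξ]
    (w : Ξ → ℝ) (hw : ∀ ξ, 1 ≤ w ξ)
    (wG : G → ℝ) (hwG : ∀ g : G, wG g = 1 + ⨆ ξ : Ξ, |w (g • ξ) - w ξ|)
    (hbdd : ∀ g : G, BddAbove (Set.range fun ξ : Ξ => |w (g • ξ) - w ξ|))
    (hfree : ∀ (g : G) (ξ : Ξ), g • ξ = ξ → g = 1)
    (b : G → Ξ → ℂ) (Θ : Set G) (hb : IsAPSymbol b Θ)
    (γ β : ℝ) (hord : HasOrder w wG b γ)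
    (x : Ξ → ℂ) (hx : Summable fun ξ : Ξ => w ξ ^ (2 * β) * ‖x ξ‖ ^ 2) :
    Summable (fun η : Ξ => w η ^ (2 * (β - γ)) * ‖opApply b x η‖ ^ 2) ∧
      ∑' η : Ξ, w η ^ (2 * (β - γ)) * ‖opApply b x η‖ ^ 2 ≤
        snorm w wG b γ |β - γ| ^ 2 * ∑' ξ : Ξ, w ξ ^ (2 * β) * ‖x ξ‖ ^ 2 :=
  stmt4_general w hw wG hwG hbdd b γ β hord x hx
end
end

section
/- Define the composed symbol (a∘b)_θ(ξ) := Σ_{θ_a θ_b = θ} a_{θ_a}(θ_b ▷ ξ) b_{θ_b}(ξ). If A = Op(a) has order α and B = Op(b) has order β, then AB = Op(a∘b) has order α+β, and for all l ≥ 0, ⦀a∘b⦀_l^{(α+β)} ≤ ⦀a⦀_l^{(α)} · ⦀b⦀_{l+|α|}^{(β)}. -/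
noncomputable section

open scoped Classical

variable {G Ξ : Type*}

/-! The composed symbol is estimated frequency by frequency: a Peetre-type bound for the weight
gives `⟨ξ⟩^{-(α+β)} |a_{θh⁻¹}(h ▷ ξ) b_h(ξ)| ≤ A_{θh⁻¹} ⟨h⟩^{|α|} B_h`, where `A`, `B` are the
frequency-wise suprema of `a`, `b`. Submultiplicativity of `⟨·⟩` on `G` then bounds the weighted
suprema of `a∘b` by a group convolution of the weighted suprema of `a` and `b`, whose total sum
is the product of the two sums. On a basis vector `e_ξ` both `AB` and `Op(a∘b)` live on the orbit
of `ξ`, which the free action identifies with `G`; there the identity is the reindexing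
`θ = θ_a θ_b`. -/

lemma rpow_mul_rpow_neg_le_rpow_abs {x y c : ℝ} (α : ℝ) (hx : 0 < x) (hy : 0 < y)
    (hxy : x ≤ y * c) (hyx : y ≤ x * c) : x ^ α * y ^ (-α) ≤ c ^ |α| := by
  rcases le_or_gt 0 α with hα | hα
  · calc x ^ α * y ^ (-α) = (x / y) ^ α := by
          rw [Real.div_rpow hx.le hy.le, Real.rpow_neg hy.le, div_eq_mul_inv]
      _ ≤ c ^ |α| := by
          rw [abs_of_nonneg hα]
          exact Real.rpow_le_rpow (by positivity) ((div_le_iff₀' hy).2 hxy) hα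
  · calc x ^ α * y ^ (-α) = (y / x) ^ (-α) := by
          rw [Real.div_rpow hy.le hx.le, Real.rpow_neg hx.le, div_inv_eq_mul, mul_comm]
      _ ≤ c ^ |α| := by
          rw [abs_of_neg hα]
          exact Real.rpow_le_rpow (by positivity) ((div_le_iff₀' hx).2 hyx) (by linarith)

lemma le_mul_of_abs_sub_le_sub_one {x y c : ℝ} (hy : 1 ≤ y) (hc : 1 ≤ c)
    (h : |x - y| ≤ c - 1) : x ≤ y * c := by
  nlinarith [(abs_le.1 h).2]

structure PeetreWeights [Group G] [MulAction G Ξ] (w : Ξ → ℝ) (wG : G → ℝ) : Prop where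
  pos : ∀ ξ, 0 < w ξ
  one_le : ∀ g, 1 ≤ wG g
  smul_le : ∀ g ξ, w (g • ξ) ≤ w ξ * wG g
  le_smul : ∀ g ξ, w ξ ≤ w (g • ξ) * wG g
  mul_le : ∀ g h, wG (g * h) ≤ wG g * wG h

namespace PeetreWeights

variable [Group G] [MulAction G Ξ] {w : Ξ → ℝ} {wG : G → ℝ}

section OfSup

variable (hwG : ∀ g : G, wG g = 1 + ⨆ ξ : Ξ, |w (g • ξ) - w ξ|)
  (hbdd : ∀ g : G, BddAbove (Set.range fun ξ : Ξ => |w (g • ξ) - w ξ|))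
include hwG hbdd

lemma abs_sub_le_of_sup (g : G) (ξ : Ξ) : |w (g • ξ) - w ξ| ≤ wG g - 1 := by
  rw [hwG g]
  linarith [le_ciSup (hbdd g) ξ]

omit hbdd in
lemma one_le_of_sup (g : G) : 1 ≤ wG g := by
  rw [hwG g]
  linarith [Real.iSup_nonneg fun ξ => abs_nonneg (w (g • ξ) - w ξ)]

lemma of_sup (hw : ∀ ξ, 1 ≤ w ξ) : PeetreWeights w wG where
  pos ξ := one_pos.trans_le (hw ξ)
  one_le := one_le_of_sup hwG
  smul_le g ξ := le_mul_of_abs_sub_le_sub_one (hw ξ) (one_le_of_sup hwG g)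
    (abs_sub_le_of_sup hwG hbdd g ξ)
  le_smul g ξ := le_mul_of_abs_sub_le_sub_one (hw (g • ξ)) (one_le_of_sup hwG g)
    (abs_sub_comm (w ξ) _ ▸ abs_sub_le_of_sup hwG hbdd g ξ)
  mul_le g h := by
    have hsup : (⨆ ξ : Ξ, |w ((g * h) • ξ) - w ξ|) ≤ (wG g - 1) + (wG h - 1) := by
      refine Real.iSup_le (fun ξ => ?_) (by linarith [one_le_of_sup hwG g, one_le_of_sup hwG h])
      calc |w ((g * h) • ξ) - w ξ|
          = |(w (g • h • ξ) - w (h • ξ)) + (w (h • ξ) - w ξ)| := by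
            rw [mul_smul, sub_add_sub_cancel]
        _ ≤ |w (g • h • ξ) - w (h • ξ)| + |w (h • ξ) - w ξ| := abs_add_le _ _
        _ ≤ (wG g - 1) + (wG h - 1) :=
            add_le_add (abs_sub_le_of_sup hwG hbdd g _) (abs_sub_le_of_sup hwG hbdd h ξ)
    rw [hwG (g * h)]
    nlinarith [one_le_of_sup hwG g, one_le_of_sup hwG h]

end OfSup

variable (hW : PeetreWeights w wG)
include hW

lemma groupWeight_pos (g : G) : 0 < wG g := one_pos.trans_le (hW.one_le g)

lemma groupWeight_nonneg (g : G) : 0 ≤ wG g := (hW.groupWeight_pos g).le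

lemma rpow_smul_mul_rpow_neg_le (α : ℝ) (g : G) (ξ : Ξ) :
    w (g • ξ) ^ α * w ξ ^ (-α) ≤ wG g ^ |α| :=
  rpow_mul_rpow_neg_le_rpow_abs α (hW.pos _) (hW.pos ξ) (hW.smul_le g ξ) (hW.le_smul g ξ)

lemma rpow_le_rpow_mul_inv_mul_rpow {l : ℝ} (hl : 0 ≤ l) (θ h : G) :
    wG θ ^ l ≤ wG (θ * h⁻¹) ^ l * wG h ^ l := by
  rw [← Real.mul_rpow (hW.groupWeight_pos _).le (hW.groupWeight_pos h).le]
  refine Real.rpow_le_rpow (hW.groupWeight_pos θ).le ?_ hl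
  simpa using hW.mul_le (θ * h⁻¹) h

end PeetreWeights

section Convolution

variable [Group G] {F H : G → ℝ} (hF : Summable F) (hH : Summable H) (hF0 : 0 ≤ F) (hH0 : 0 ≤ H)
include hF hH hF0 hH0

/-- The shear `(θ, h) ↦ (θ h⁻¹, h)` turns the convolution into a product. -/
def mulInvShear (G : Type*) [Group G] : G × G ≃ G × G where
  toFun p := (p.1 * p.2⁻¹, p.2)
  invFun p := (p.1 * p.2, p.2)
  left_inv p := by simp
  right_inv p := by simp

lemma summable_prod_mul_inv_mul : Summable fun p : G × G => F (p.1 * p.2⁻¹) * H p.2 :=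
  (mulInvShear G).summable_iff.2 (hF.mul_of_nonneg hH hF0 hH0)

lemma summable_mul_inv_mul (θ : G) : Summable fun h => F (θ * h⁻¹) * H h :=
  ((summable_prod_of_nonneg fun _ => mul_nonneg (hF0 _) (hH0 _)).1
    (summable_prod_mul_inv_mul hF hH hF0 hH0)).1 θ

lemma summable_tsum_mul_inv_mul : Summable fun θ => ∑' h, F (θ * h⁻¹) * H h :=
  ((summable_prod_of_nonneg fun _ => mul_nonneg (hF0 _) (hH0 _)).1
    (summable_prod_mul_inv_mul hF hH hF0 hH0)).2

lemma tsum_tsum_mul_inv_mul : ∑' θ, ∑' h, F (θ * h⁻¹) * H h = (∑' g, F g) * ∑' h, H h := by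
  rw [← (summable_prod_mul_inv_mul hF hH hF0 hH0).tsum_prod'
      (summable_mul_inv_mul hF hH hF0 hH0)]
  exact ((mulInvShear G).tsum_eq fun p => F p.1 * H p.2).trans
    (hF.tsum_mul_tsum hH (hF.mul_of_nonneg hH hF0 hH0)).symm

end Convolution

/-- `sup_ξ ⟨ξ⟩^{−γ} |b_θ(ξ)|`, the frequency-wise part of the symbol norms. -/
def symbSup (w : Ξ → ℝ) (b : G → Ξ → ℂ) (γ : ℝ) (θ : G) : ℝ :=
  ⨆ ξ : Ξ, w ξ ^ (-γ) * ‖b θ ξ‖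

section SymbolEstimates

variable {w : Ξ → ℝ} {b : G → Ξ → ℂ} {γ : ℝ}

lemma symbSup_nonneg (hw : ∀ ξ, 0 < w ξ) (θ : G) : 0 ≤ symbSup w b γ θ :=
  Real.iSup_nonneg fun ξ => mul_nonneg (Real.rpow_nonneg (hw ξ).le _) (norm_nonneg _)

lemma norm_le_symbSup_mul_rpow {θ : G} (hw : ∀ ξ, 0 < w ξ)
    (hb : BddAbove (Set.range fun ξ : Ξ => w ξ ^ (-γ) * ‖b θ ξ‖)) (ξ : Ξ) :
    ‖b θ ξ‖ ≤ symbSup w b γ θ * w ξ ^ γ := by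
  rw [← div_le_iff₀ (Real.rpow_pos_of_pos (hw ξ) γ), div_eq_mul_inv,
    ← Real.rpow_neg (hw ξ).le, mul_comm]
  exact le_ciSup hb ξ

lemma rpow_mul_symbSup_nonneg (hw : ∀ ξ, 0 < w ξ) {wG : G → ℝ} (hwG : ∀ g, 0 ≤ wG g) (l : ℝ) :
    0 ≤ fun θ => wG θ ^ l * symbSup w b γ θ := fun θ =>
  mul_nonneg (Real.rpow_nonneg (hwG θ) l) (symbSup_nonneg hw θ)

lemma summable_rpow_mul_symbSup {wG : G → ℝ} (hb : HasOrder w wG b γ) {l : ℝ} (hl : 0 ≤ l) :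
    Summable fun θ => wG θ ^ l * symbSup w b γ θ :=
  hb.2 l hl

lemma summable_symbSup {wG : G → ℝ} (hb : HasOrder w wG b γ) : Summable (symbSup w b γ) := by
  simpa using summable_rpow_mul_symbSup hb le_rfl

end SymbolEstimates

section Composition

variable [Group G] [MulAction G Ξ] {w : Ξ → ℝ} {wG : G → ℝ} {a b : G → Ξ → ℂ} {α β : ℝ}
  (hW : PeetreWeights w wG) (ha : HasOrder w wG a α) (hb : HasOrder w wG b β)
include hW ha hb

lemma rpow_neg_mul_norm_mul_le (g h : G) (ξ : Ξ) :
    w ξ ^ (-(α + β)) * ‖a g (h • ξ) * b h ξ‖ ≤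
      symbSup w a α g * (wG h ^ |α| * symbSup w b β h) := by
  have hξ := hW.pos ξ
  have hA := norm_le_symbSup_mul_rpow hW.pos (ha.1 g) (h • ξ)
  have hB := norm_le_symbSup_mul_rpow hW.pos (hb.1 h) ξ
  have hA0 := symbSup_nonneg (b := a) (γ := α) hW.pos g
  have hB0 := symbSup_nonneg (b := b) (γ := β) hW.pos h
  calc w ξ ^ (-(α + β)) * ‖a g (h • ξ) * b h ξ‖
      ≤ w ξ ^ (-(α + β)) * ((symbSup w a α g * w (h • ξ) ^ α) * (symbSup w b β h * w ξ ^ β)) := by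
        refine mul_le_mul_of_nonneg_left ?_ (Real.rpow_nonneg hξ.le _)
        rw [norm_mul]
        exact mul_le_mul hA hB (norm_nonneg _) (mul_nonneg hA0 (Real.rpow_nonneg (hW.pos _).le _))
    _ = symbSup w a α g * symbSup w b β h * (w (h • ξ) ^ α * (w ξ ^ β * w ξ ^ (-(α + β)))) := by
        ring
    _ = symbSup w a α g * symbSup w b β h * (w (h • ξ) ^ α * w ξ ^ (-α)) := by
        rw [← Real.rpow_add hξ]
        ring_nf
    _ ≤ symbSup w a α g * symbSup w b β h * wG h ^ |α| := by
        gcongr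
        exact hW.rpow_smul_mul_rpow_neg_le α h ξ
    _ = symbSup w a α g * (wG h ^ |α| * symbSup w b β h) := by ring

lemma summable_symbSup_mul_inv_mul (θ : G) :
    Summable fun h => symbSup w a α (θ * h⁻¹) * (wG h ^ |α| * symbSup w b β h) :=
  summable_mul_inv_mul (summable_symbSup ha) (summable_rpow_mul_symbSup hb (abs_nonneg α))
    (symbSup_nonneg hW.pos) (rpow_mul_symbSup_nonneg hW.pos hW.groupWeight_nonneg _) θ

lemma rpow_neg_mul_norm_compSymb_le (θ : G) (ξ : Ξ) :
    w ξ ^ (-(α + β)) * ‖compSymb a b θ ξ‖ ≤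
      ∑' h, symbSup w a α (θ * h⁻¹) * (wG h ^ |α| * symbSup w b β h) := by
  have hterm := fun h => rpow_neg_mul_norm_mul_le hW ha hb (θ * h⁻¹) h ξ
  have hsum := summable_symbSup_mul_inv_mul hW ha hb θ
  have hwξ : 0 < w ξ ^ (-(α + β)) := Real.rpow_pos_of_pos (hW.pos ξ) _
  have hweighted : Summable fun h => w ξ ^ (-(α + β)) * ‖a (θ * h⁻¹) (h • ξ) * b h ξ‖ :=
    hsum.of_nonneg_of_le (fun h => mul_nonneg hwξ.le (norm_nonneg _)) hterm
  have hnorm : Summable fun h => ‖a (θ * h⁻¹) (h • ξ) * b h ξ‖ :=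
    (hweighted.mul_left (w ξ ^ (-(α + β)))⁻¹).congr fun h => inv_mul_cancel_left₀ hwξ.ne' _
  calc w ξ ^ (-(α + β)) * ‖compSymb a b θ ξ‖
      ≤ w ξ ^ (-(α + β)) * ∑' h, ‖a (θ * h⁻¹) (h • ξ) * b h ξ‖ := by
        gcongr
        exact norm_tsum_le_tsum_norm hnorm
    _ = ∑' h, w ξ ^ (-(α + β)) * ‖a (θ * h⁻¹) (h • ξ) * b h ξ‖ := tsum_mul_left.symm
    _ ≤ _ := hweighted.tsum_le_tsum hterm hsum

lemma bddAbove_compSymb (θ : G) :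
    BddAbove (Set.range fun ξ : Ξ => w ξ ^ (-(α + β)) * ‖compSymb a b θ ξ‖) :=
  ⟨_, Set.forall_mem_range.2 (rpow_neg_mul_norm_compSymb_le hW ha hb θ)⟩

lemma rpow_mul_symbSup_compSymb_le {l : ℝ} (hl : 0 ≤ l) (θ : G) :
    wG θ ^ l * symbSup w (compSymb a b) (α + β) θ ≤
      ∑' h, wG (θ * h⁻¹) ^ l * symbSup w a α (θ * h⁻¹) *
        (wG h ^ (l + |α|) * symbSup w b β h) := by
  have hpos := hW.groupWeight_pos
  have hA0 := symbSup_nonneg (b := a) (γ := α) hW.pos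
  have hB0 := symbSup_nonneg (b := b) (γ := β) hW.pos
  have hsum := summable_symbSup_mul_inv_mul hW ha hb θ
  have hθ : 0 ≤ wG θ ^ l := Real.rpow_nonneg (hpos θ).le _
  have hterm : ∀ h, wG θ ^ l * (symbSup w a α (θ * h⁻¹) * (wG h ^ |α| * symbSup w b β h)) ≤
      wG (θ * h⁻¹) ^ l * symbSup w a α (θ * h⁻¹) * (wG h ^ (l + |α|) * symbSup w b β h) := by
    intro h
    rw [Real.rpow_add (hpos h)]
    calc wG θ ^ l * (symbSup w a α (θ * h⁻¹) * (wG h ^ |α| * symbSup w b β h))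
        ≤ (wG (θ * h⁻¹) ^ l * wG h ^ l) *
            (symbSup w a α (θ * h⁻¹) * (wG h ^ |α| * symbSup w b β h)) := by
          gcongr
          · exact mul_nonneg (hA0 _) (mul_nonneg (Real.rpow_nonneg (hpos h).le _) (hB0 h))
          · exact hW.rpow_le_rpow_mul_inv_mul_rpow hl θ h
      _ = _ := by ring
  have hrhs : Summable fun h => wG (θ * h⁻¹) ^ l * symbSup w a α (θ * h⁻¹) *
      (wG h ^ (l + |α|) * symbSup w b β h) :=
    summable_mul_inv_mul (summable_rpow_mul_symbSup ha hl)
      (summable_rpow_mul_symbSup hb (l := l + |α|) (by positivity))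
      (rpow_mul_symbSup_nonneg hW.pos hW.groupWeight_nonneg l)
      (rpow_mul_symbSup_nonneg hW.pos hW.groupWeight_nonneg _) θ
  calc wG θ ^ l * symbSup w (compSymb a b) (α + β) θ
      ≤ wG θ ^ l * ∑' h, symbSup w a α (θ * h⁻¹) * (wG h ^ |α| * symbSup w b β h) := by
        gcongr
        exact Real.iSup_le (rpow_neg_mul_norm_compSymb_le hW ha hb θ)
          (tsum_nonneg fun h =>
            mul_nonneg (hA0 _) (mul_nonneg (Real.rpow_nonneg (hpos h).le _) (hB0 h)))
    _ = ∑' h, wG θ ^ l * (symbSup w a α (θ * h⁻¹) * (wG h ^ |α| * symbSup w b β h)) :=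
        tsum_mul_left.symm
    _ ≤ _ := (hsum.mul_left _).tsum_le_tsum hterm hrhs

lemma summable_rpow_mul_symbSup_compSymb {l : ℝ} (hl : 0 ≤ l) :
    Summable fun θ => wG θ ^ l * symbSup w (compSymb a b) (α + β) θ :=
  (summable_tsum_mul_inv_mul (summable_rpow_mul_symbSup ha hl)
    (summable_rpow_mul_symbSup hb (l := l + |α|) (by positivity))
    (rpow_mul_symbSup_nonneg hW.pos hW.groupWeight_nonneg l)
    (rpow_mul_symbSup_nonneg hW.pos hW.groupWeight_nonneg _)).of_nonneg_of_le
      (rpow_mul_symbSup_nonneg hW.pos hW.groupWeight_nonneg l)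
      (rpow_mul_symbSup_compSymb_le hW ha hb hl)

lemma snorm_compSymb_le {l : ℝ} (hl : 0 ≤ l) :
    snorm w wG (compSymb a b) (α + β) l ≤ snorm w wG a α l * snorm w wG b β (l + |α|) := by
  have hwG := hW.groupWeight_nonneg
  have hF := summable_rpow_mul_symbSup ha hl
  have hH := summable_rpow_mul_symbSup hb (l := l + |α|) (by positivity)
  have hF0 := rpow_mul_symbSup_nonneg (b := a) (γ := α) hW.pos hwG l
  have hH0 := rpow_mul_symbSup_nonneg (b := b) (γ := β) hW.pos hwG (l + |α|)
  have hconv := summable_tsum_mul_inv_mul hF hH hF0 hH0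
  have hle := (summable_rpow_mul_symbSup_compSymb hW ha hb hl).tsum_le_tsum
    (rpow_mul_symbSup_compSymb_le hW ha hb hl) hconv
  exact hle.trans_eq (tsum_tsum_mul_inv_mul hF hH hF0 hH0)

end Composition

section BasisVectors

variable [Group G] [MulAction G Ξ] (hfree : ∀ (g : G) (ξ : Ξ), g • ξ = ξ → g = 1)
include hfree

lemma opApply_basis_smul (b : G → Ξ → ℂ) (ξ : Ξ) (g : G) :
    opApply b (fun η => if η = ξ then 1 else 0) (g • ξ) = b g ξ := by
  refine (tsum_eq_single g fun θ hθ => ?_).trans ?_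
  · have hne : θ⁻¹ • g • ξ ≠ ξ := fun h =>
      hθ (inv_mul_eq_one.1 (hfree (θ⁻¹ * g) ξ (by rwa [mul_smul])))
    simp [hne]
  · simp

omit hfree in
lemma opApply_basis_of_forall_smul_ne (b : G → Ξ → ℂ) {ξ η : Ξ} (hη : ∀ g : G, g • ξ ≠ η) :
    opApply b (fun η => if η = ξ then 1 else 0) η = 0 := by
  refine (tsum_congr fun θ => ?_).trans tsum_zero
  have hne : θ⁻¹ • η ≠ ξ := fun h => hη θ (by rw [← h, smul_inv_smul])
  simp [hne]

lemma opApply_compSymb_basis (a b : G → Ξ → ℂ) (ξ : Ξ) :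
    opApply (compSymb a b) (fun η => if η = ξ then 1 else 0) =
      opApply a (opApply b (fun η => if η = ξ then 1 else 0)) := by
  funext η
  by_cases horbit : ∃ g : G, g • ξ = η
  · obtain ⟨g, rfl⟩ := horbit
    have hinner : ∀ θ : G, opApply b (fun η => if η = ξ then 1 else 0) (θ⁻¹ • g • ξ) =
        b (θ⁻¹ * g) ξ := fun θ => by rw [smul_smul, opApply_basis_smul hfree]
    rw [opApply_basis_smul hfree]
    show compSymb a b g ξ = ∑' θ, a θ (θ⁻¹ • g • ξ) * _
    simp only [hinner]
    rw [← ((Equiv.inv G).trans (Equiv.mulLeft g)).tsum_eq]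
    refine tsum_congr fun h => ?_
    simp [smul_smul]
  · push Not at horbit
    rw [opApply_basis_of_forall_smul_ne _ horbit]
    refine ((tsum_congr fun θ => ?_).trans tsum_zero).symm
    have hθ : ∀ h : G, h • ξ ≠ θ⁻¹ • η := fun h hh =>
      horbit (θ * h) (by rw [mul_smul, hh, smul_inv_smul])
    rw [opApply_basis_of_forall_smul_ne _ hθ, mul_zero]

end BasisVectors

theorem stmt7_general [Group G] [MulAction G Ξ]
    (w : Ξ → ℝ) (hw : ∀ ξ, 1 ≤ w ξ)
    (wG : G → ℝ) (hwG : ∀ g : G, wG g = 1 + ⨆ ξ : Ξ, |w (g • ξ) - w ξ|)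
    (hbdd : ∀ g : G, BddAbove (Set.range fun ξ : Ξ => |w (g • ξ) - w ξ|))
    (hfree : ∀ (g : G) (ξ : Ξ), g • ξ = ξ → g = 1)
    (a b : G → Ξ → ℂ)
    (α β : ℝ) (horda : HasOrder w wG a α) (hordb : HasOrder w wG b β) :
    HasOrder w wG (compSymb a b) (α + β) ∧
      (∀ l : ℝ, 0 ≤ l →
        snorm w wG (compSymb a b) (α + β) l ≤
          snorm w wG a α l * snorm w wG b β (l + |α|)) ∧
      ∀ ξ : Ξ,
        opApply (compSymb a b) (fun η => if η = ξ then 1 else 0) =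
          opApply a (opApply b (fun η => if η = ξ then 1 else 0)) := by
  have hW : PeetreWeights w wG := .of_sup hwG hbdd hw
  exact ⟨⟨bddAbove_compSymb hW horda hordb,
      fun _ hl => summable_rpow_mul_symbSup_compSymb hW horda hordb hl⟩,
    fun _ hl => snorm_compSymb_le hW horda hordb hl, opApply_compSymb_basis hfree a b⟩

/-- for symbols `a` of order `α` and `b` of order `β`, the composed symbol
`a∘b` has order `α+β`, satisfies `AB = Op(a∘b)` (checked on the basis vectors `e_ξ`),
and `⦀a∘b⦀_l^{(α+β)} ≤ ⦀a⦀_l^{(α)} ⦀b⦀_{l+|α|}^{(β)}` for all `l ≥ 0`. -/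
theorem stmt7 [Nonempty Ξ] [Group G] [MulAction G Ξ]
    (w : Ξ → ℝ) (hw : ∀ ξ, 1 ≤ w ξ)
    (wG : G → ℝ) (hwG : ∀ g : G, wG g = 1 + ⨆ ξ : Ξ, |w (g • ξ) - w ξ|)
    (hbdd : ∀ g : G, BddAbove (Set.range fun ξ : Ξ => |w (g • ξ) - w ξ|))
    (hfree : ∀ (g : G) (ξ : Ξ), g • ξ = ξ → g = 1)
    (a b : G → Ξ → ℂ) (Θa Θb : Set G)
    (ha : IsAPSymbol a Θa) (hb : IsAPSymbol b Θb)
    (α β : ℝ) (horda : HasOrder w wG a α) (hordb : HasOrder w wG b β) :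
    HasOrder w wG (compSymb a b) (α + β) ∧
      (∀ l : ℝ, 0 ≤ l →
        snorm w wG (compSymb a b) (α + β) l ≤
          snorm w wG a α l * snorm w wG b β (l + |α|)) ∧
      ∀ ξ : Ξ,
        opApply (compSymb a b) (fun η => if η = ξ then 1 else 0) =
          opApply a (opApply b (fun η => if η = ξ then 1 else 0)) :=
  stmt7_general w hw wG hwG hbdd hfree a b α β horda hordb
end
end

section
/- Let A be a diagonal operator with symbol a : Ξ → ℂ satisfying the ellipticity condition |a(ξ)| ≥ κ ⟨ξ⟩^α whenever ⟨ξ⟩ ≥ r (with κ > 0, r ≥ 1, α > 0). Let P_r be the diagonal projection onto {ξ : ⟨ξ⟩ ≤ r} and define Ã := A P_r^c + κ r^α P_r, where P_r^c = Id − P_r. Then Ã is invertible with diagonal inverse of order −α, and for all l ≥ 0: ⦀Ã⁻¹⦀_l^{(γ)} ≤ κ⁻¹ r^{−α} if γ ≥ 0, and ⦀Ã⁻¹⦀_l^{(γ)} ≤ κ⁻¹ r^{−α−γ} if −α ≤ γ < 0. -/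
/-!
Below the cutoff `r` the modified symbol is the constant `κ r^α`, above it the ellipticity bound
applies, so in both regimes `|ã(ξ)| ≥ κ · max(r, ⟨ξ⟩)^α`. The weighted bounds then reduce to
monotonicity of real powers: for `γ ≥ 0` the weight `⟨ξ⟩^{-γ}` is at most `1`, and for
`-α ≤ γ < 0` it is at most `max(r, ⟨ξ⟩)^{-γ}`, leaving the power `max(r, ⟨ξ⟩)^{-α-γ}` of
nonpositive exponent.
-/

open Real

noncomputable section

def ellipticCutoff {𝕜 : Type*} [RCLike 𝕜] (κ α r w : ℝ) (z : 𝕜) : 𝕜 :=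
  if w ≤ r then ((κ * r ^ α : ℝ) : 𝕜) else z

section EllipticCutoff

variable {𝕜 : Type*} [RCLike 𝕜] {κ α r w : ℝ} {z : 𝕜}

theorem le_norm_ellipticCutoff (hκ : 0 < κ) (hr : 0 < r)
    (hz : r ≤ w → κ * w ^ α ≤ ‖z‖) :
    κ * max r w ^ α ≤ ‖ellipticCutoff κ α r w z‖ := by
  unfold ellipticCutoff
  split_ifs with hwr
  · rw [max_eq_left hwr, RCLike.norm_ofReal, abs_of_pos (by positivity)]
  · rw [max_eq_right (le_of_not_ge hwr)]
    exact hz (le_of_not_ge hwr)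

theorem ellipticCutoff_ne_zero (hκ : 0 < κ) (hr : 0 < r)
    (hz : r ≤ w → κ * w ^ α ≤ ‖z‖) :
    ellipticCutoff κ α r w z ≠ 0 := by
  have hpos : 0 < κ * max r w ^ α :=
    mul_pos hκ (rpow_pos_of_pos (lt_max_of_lt_left hr) α)
  exact norm_pos_iff.mp (hpos.trans_le (le_norm_ellipticCutoff hκ hr hz))

theorem norm_inv_ellipticCutoff_le (hκ : 0 < κ) (hr : 0 < r)
    (hz : r ≤ w → κ * w ^ α ≤ ‖z‖) :
    ‖(ellipticCutoff κ α r w z)⁻¹‖ ≤ κ⁻¹ * max r w ^ (-α) := by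
  have hmax : 0 < max r w := lt_max_of_lt_left hr
  rw [norm_inv, rpow_neg hmax.le, ← mul_inv]
  exact inv_anti₀ (mul_pos hκ (rpow_pos_of_pos hmax α)) (le_norm_ellipticCutoff hκ hr hz)

end EllipticCutoff

theorem rpow_neg_mul_max_rpow_neg_le {α γ r w : ℝ} (hw : 1 ≤ w) (hr : 0 < r)
    (hα : 0 ≤ α) (hγ : 0 ≤ γ) :
    w ^ (-γ) * max r w ^ (-α) ≤ r ^ (-α) := by
  have hweight : w ^ (-γ) ≤ 1 := rpow_le_one_of_one_le_of_nonpos hw (neg_nonpos.mpr hγ)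
  have hmax : max r w ^ (-α) ≤ r ^ (-α) :=
    rpow_le_rpow_of_nonpos hr (le_max_left r w) (neg_nonpos.mpr hα)
  calc w ^ (-γ) * max r w ^ (-α) ≤ 1 * r ^ (-α) :=
        mul_le_mul hweight hmax (by positivity) zero_le_one
    _ = r ^ (-α) := one_mul _

theorem rpow_neg_mul_max_rpow_neg_le_rpow_neg_sub {α γ r w : ℝ} (hw : 0 < w) (hr : 0 < r)
    (hαγ : -α ≤ γ) (hγ : γ ≤ 0) :
    w ^ (-γ) * max r w ^ (-α) ≤ r ^ (-α - γ) := by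
  have hmax : 0 < max r w := lt_max_of_lt_left hr
  calc w ^ (-γ) * max r w ^ (-α) ≤ max r w ^ (-γ) * max r w ^ (-α) := by
        gcongr
        · linarith
        · exact le_max_right r w
    _ = max r w ^ (-α - γ) := by rw [← rpow_add hmax]; ring_nf
    _ ≤ r ^ (-α - γ) := rpow_le_rpow_of_nonpos hr (le_max_left r w) (by linarith)

end

theorem stmt10_general {Ξ : Type*}
    (w : Ξ → ℝ) (hw : ∀ ξ, 1 ≤ w ξ)
    (a : Ξ → ℂ) (α κ r : ℝ) (hα : 0 < α) (hκ : 0 < κ) (hr : 1 ≤ r)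
    (hell : ∀ ξ, r ≤ w ξ → κ * w ξ ^ α ≤ ‖a ξ‖)
    (atil : Ξ → ℂ)
    (hatil : ∀ ξ, atil ξ = if w ξ ≤ r then ((κ * r ^ α : ℝ) : ℂ) else a ξ) :
    (∀ ξ, atil ξ ≠ 0) ∧
      (∀ γ : ℝ, 0 ≤ γ → ∀ ξ, w ξ ^ (-γ) * ‖(atil ξ)⁻¹‖ ≤ κ⁻¹ * r ^ (-α)) ∧
      (∀ γ : ℝ, -α ≤ γ → γ < 0 → ∀ ξ, w ξ ^ (-γ) * ‖(atil ξ)⁻¹‖ ≤ κ⁻¹ * r ^ (-α - γ)) := by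
  have hr0 : 0 < r := one_pos.trans_le hr
  have hw0 : ∀ ξ, 0 < w ξ := fun ξ => one_pos.trans_le (hw ξ)
  have hatil' : ∀ ξ, atil ξ = ellipticCutoff κ α r (w ξ) (a ξ) := hatil
  have hinv : ∀ ξ, ‖(atil ξ)⁻¹‖ ≤ κ⁻¹ * max r (w ξ) ^ (-α) := fun ξ => by
    rw [hatil']; exact norm_inv_ellipticCutoff_le hκ hr0 (hell ξ)
  have hweighted : ∀ (γ : ℝ) ξ, w ξ ^ (-γ) * ‖(atil ξ)⁻¹‖ ≤
      κ⁻¹ * (w ξ ^ (-γ) * max r (w ξ) ^ (-α)) := fun γ ξ => by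
    rw [mul_left_comm]
    exact mul_le_mul_of_nonneg_left (hinv ξ) (rpow_nonneg (hw0 ξ).le _)
  refine ⟨fun ξ => hatil' ξ ▸ ellipticCutoff_ne_zero hκ hr0 (hell ξ), ?_, ?_⟩
  · intro γ hγ ξ
    exact (hweighted γ ξ).trans <| mul_le_mul_of_nonneg_left
      (rpow_neg_mul_max_rpow_neg_le (hw ξ) hr0 hα.le hγ) (inv_nonneg.mpr hκ.le)
  · intro γ hαγ hγ ξ
    exact (hweighted γ ξ).trans <| mul_le_mul_of_nonneg_left
      (rpow_neg_mul_max_rpow_neg_le_rpow_neg_sub (hw0 ξ) hr0 hαγ hγ.le)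
      (inv_nonneg.mpr hκ.le)

/-- for a diagonal elliptic symbol `a` with `|a(ξ)| ≥ κ⟨ξ⟩^α` for
`⟨ξ⟩ ≥ r`, the modified symbol `ã(ξ) = a(ξ)` for `⟨ξ⟩ > r` and `κ r^α` for `⟨ξ⟩ ≤ r`
is invertible, its inverse is diagonal of order `−α`, and the diagonal symbol norms
`⦀Ã⁻¹⦀_l^{(γ)} = sup_ξ ⟨ξ⟩^{−γ} |ã(ξ)⁻¹|` satisfy the stated bounds. -/
theorem stmt10 {Ξ : Type*} [Nonempty Ξ]
    (w : Ξ → ℝ) (hw : ∀ ξ, 1 ≤ w ξ)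
    (a : Ξ → ℂ) (α κ r : ℝ) (hα : 0 < α) (hκ : 0 < κ) (hr : 1 ≤ r)
    (hell : ∀ ξ, r ≤ w ξ → κ * w ξ ^ α ≤ ‖a ξ‖)
    (atil : Ξ → ℂ)
    (hatil : ∀ ξ, atil ξ = if w ξ ≤ r then ((κ * r ^ α : ℝ) : ℂ) else a ξ) :
    (∀ ξ, atil ξ ≠ 0) ∧
      (∀ γ : ℝ, 0 ≤ γ → ∀ ξ, w ξ ^ (-γ) * ‖(atil ξ)⁻¹‖ ≤ κ⁻¹ * r ^ (-α)) ∧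
      (∀ γ : ℝ, -α ≤ γ → γ < 0 → ∀ ξ, w ξ ^ (-γ) * ‖(atil ξ)⁻¹‖ ≤ κ⁻¹ * r ^ (-α - γ)) :=
  stmt10_general w hw a α κ r hα hκ hr hell atil hatil
end

section
/- Let Ψ be a bounded symmetric almost periodic operator of order 0. Then the exponential series exp(iΨ) = Σ_{k≥0} (iΨ)^k / k! converges in the symbol norms ⦀·⦀_l^{(0)} for every l ≥ 0, defines a unitary operator on ℓ²(Ξ), and for any operator A of order α the gauge transform satisfies the absolutely convergent expansion exp(−iΨ) A exp(iΨ) = Σ_{k≥0} (1/k!) ad^k(A; Ψ), where ad(A;Ψ) = i(AΨ − ΨA) and ad^k is the k-fold iterated commutator. -/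
noncomputable section

open scoped Classical

variable {G Ξ : Type*}

/-- Powers of a symbol under composition (with the identity symbol as `0`th power). -/
def powSymb [Group G] [MulAction G Ξ] (ψ : G → Ξ → ℂ) : ℕ → G → Ξ → ℂ
  | 0 => fun θ _ => if θ = 1 then 1 else 0
  | n + 1 => compSymb ψ (powSymb ψ n)

/-- The symbol of `exp(zΨ)`, given by the exponential series `Σ_k z^k Ψ^k / k!`. -/
def expSymb [Group G] [MulAction G Ξ] (z : ℂ) (ψ : G → Ξ → ℂ) : G → Ξ → ℂ :=
  fun θ ξ => ∑' k : ℕ, z ^ k / (Nat.factorial k : ℂ) * powSymb ψ k θ ξ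


/-!
Everything is controlled by majorants: a symbol `b` of order `γ` satisfies
`|b_θ(ξ)| ≤ ⟨ξ⟩^γ m(θ)` with `Σ_θ ⟨θ⟩^l m(θ) < ∞` for all `l ≥ 0`. Since
`⟨h ▷ ξ⟩^γ ≤ ⟨ξ⟩^γ ⟨h⟩^|γ|` and `⟨θ h⟩ ≤ ⟨θ⟩ ⟨h⟩`, composing symbols convolves their majorants
on `G`, and the weighted `ℓ¹` norms are submultiplicative. This gives `⦀Ψ^k⦀_l ≤ ⦀Ψ⦀_l^k` and
`⦀ad^k(A;Ψ)⦀_l ≤ (⦀Ψ⦀_{l+|α|} + ⦀Ψ⦀_l)^k ⦀A⦀_l`, so both series converge after division by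
`k!`. The same bounds make all the double series involved absolutely convergent, which justifies
associativity of composition, the Cauchy product `exp(zΨ) exp(z'Ψ) = exp((z+z')Ψ)` (hence
unitarity), and regrouping `Σ_{j,m} (−iΨ)^j/j! · A · (iΨ)^m/m!` along `j + m = k` into
`ad^k(A;Ψ)/k!` by the binomial formula.
-/

open Finset.HasAntidiagonal
open scoped Nat

structure IsAdmissibleWeight [Group G] [MulAction G Ξ] (w : Ξ → ℝ) (wG : G → ℝ) : Prop where
  one_le : ∀ ξ, 1 ≤ w ξ
  one_le_G : ∀ g, 1 ≤ wG g
  map_one : wG 1 = 1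
  map_mul_le : ∀ g h, wG (g * h) ≤ wG g * wG h
  smul_le : ∀ (h : G) ξ, w (h • ξ) ≤ w ξ * wG h
  le_smul : ∀ (h : G) ξ, w ξ ≤ w (h • ξ) * wG h

namespace IsAdmissibleWeight

variable [Group G] [MulAction G Ξ] {w : Ξ → ℝ} {wG : G → ℝ}

theorem of_iSup_abs_sub (hw : ∀ ξ, 1 ≤ w ξ)
    (hwG : ∀ g : G, wG g = 1 + ⨆ ξ : Ξ, |w (g • ξ) - w ξ|)
    (hbdd : ∀ g : G, BddAbove (Set.range fun ξ : Ξ => |w (g • ξ) - w ξ|)) :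
    IsAdmissibleWeight w wG := by
  have hsup0 : ∀ g : G, 0 ≤ ⨆ ξ : Ξ, |w (g • ξ) - w ξ| := fun g =>
    Real.iSup_nonneg fun ξ => abs_nonneg _
  have hG : ∀ g : G, 1 ≤ wG g := fun g => by rw [hwG g]; linarith [hsup0 g]
  have hdiff : ∀ (g : G) ξ, |w (g • ξ) - w ξ| ≤ wG g - 1 := fun g ξ => by
    rw [hwG g]; linarith [le_ciSup (hbdd g) ξ]
  refine ⟨hw, hG, ?_, fun g h => ?_, fun h ξ => ?_, fun h ξ => ?_⟩
  · have : (⨆ ξ : Ξ, |w ((1 : G) • ξ) - w ξ|) ≤ 0 :=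
      Real.iSup_le (fun ξ => by simp) le_rfl
    linarith [hwG 1, hsup0 1]
  · have hsub : (⨆ ξ : Ξ, |w ((g * h) • ξ) - w ξ|) ≤ (wG g - 1) + (wG h - 1) := by
      refine Real.iSup_le (fun ξ => ?_) (by linarith [hG g, hG h])
      calc |w ((g * h) • ξ) - w ξ|
          = |(w (g • h • ξ) - w (h • ξ)) + (w (h • ξ) - w ξ)| := by rw [mul_smul]; ring_nf
        _ ≤ |w (g • h • ξ) - w (h • ξ)| + |w (h • ξ) - w ξ| := abs_add_le _ _
        _ ≤ (wG g - 1) + (wG h - 1) := add_le_add (hdiff g _) (hdiff h ξ)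
    nlinarith [hwG (g * h), hG g, hG h]
  · nlinarith [le_abs_self (w (h • ξ) - w ξ), hdiff h ξ, hw ξ, hG h]
  · nlinarith [neg_abs_le (w (h • ξ) - w ξ), hdiff h ξ, hw (h • ξ), hG h]

variable (hW : IsAdmissibleWeight w wG)
include hW

theorem pos (ξ : Ξ) : 0 < w ξ := one_pos.trans_le (hW.one_le ξ)

theorem pos_G (g : G) : 0 < wG g := one_pos.trans_le (hW.one_le_G g)

theorem rpow_nonneg (γ : ℝ) (ξ : Ξ) : 0 ≤ w ξ ^ γ := Real.rpow_nonneg (hW.pos ξ).le γ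

theorem rpow_nonneg_G (l : ℝ) (g : G) : 0 ≤ wG g ^ l := Real.rpow_nonneg (hW.pos_G g).le l

theorem one_le_rpow_G {l : ℝ} (hl : 0 ≤ l) (g : G) : 1 ≤ wG g ^ l :=
  Real.one_le_rpow (hW.one_le_G g) hl

theorem rpow_map_mul_le {l : ℝ} (hl : 0 ≤ l) (g h : G) :
    wG (g * h) ^ l ≤ wG g ^ l * wG h ^ l := by
  rw [← Real.mul_rpow (hW.pos_G g).le (hW.pos_G h).le]
  exact Real.rpow_le_rpow (hW.pos_G _).le (hW.map_mul_le g h) hl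

theorem rpow_smul_le (γ : ℝ) (h : G) (ξ : Ξ) : w (h • ξ) ^ γ ≤ w ξ ^ γ * wG h ^ |γ| := by
  rcases le_or_gt 0 γ with hγ | hγ
  · rw [abs_of_nonneg hγ, ← Real.mul_rpow (hW.pos ξ).le (hW.pos_G h).le]
    exact Real.rpow_le_rpow (hW.pos _).le (hW.smul_le h ξ) hγ
  · have hle : w ξ / wG h ≤ w (h • ξ) := (div_le_iff₀ (hW.pos_G h)).mpr (hW.le_smul h ξ)
    calc w (h • ξ) ^ γ ≤ (w ξ / wG h) ^ γ :=
          Real.rpow_le_rpow_of_nonpos (div_pos (hW.pos ξ) (hW.pos_G h)) hle hγ.le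
      _ = w ξ ^ γ * wG h ^ |γ| := by
          rw [abs_of_neg hγ, Real.div_rpow (hW.pos ξ).le (hW.pos_G h).le,
            Real.rpow_neg (hW.pos_G h).le, div_eq_mul_inv]

end IsAdmissibleWeight

def groupConv [Group G] (f g : G → ℝ) (θ : G) : ℝ := ∑' h, f (θ * h⁻¹) * g h

section Convolution

variable [Group G] {f g : G → ℝ}

theorem summable_groupConv_prod (hf0 : 0 ≤ f) (hg0 : 0 ≤ g) (hf : Summable f) (hg : Summable g) :
    Summable fun p : G × G => f (p.1 * p.2⁻¹) * g p.2 := by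
  let e : G × G ≃ G × G :=
    ⟨fun p => (p.1 * p.2⁻¹, p.2), fun p => (p.1 * p.2, p.2), fun p => by simp, fun p => by simp⟩
  exact e.summable_iff.mpr (hf.mul_of_nonneg hg hf0 hg0)

theorem summable_groupConv_apply (hf0 : 0 ≤ f) (hg0 : 0 ≤ g) (hf : Summable f) (hg : Summable g)
    (θ : G) : Summable fun h => f (θ * h⁻¹) * g h :=
  (summable_groupConv_prod hf0 hg0 hf hg).prod_factor θ

theorem hasSum_groupConv (hf0 : 0 ≤ f) (hg0 : 0 ≤ g) (hf : Summable f) (hg : Summable g) :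
    HasSum (groupConv f g) ((∑' x, f x) * ∑' x, g x) := by
  have hF := summable_groupConv_prod hf0 hg0 hf hg
  have htotal : ∑' p : G × G, f (p.1 * p.2⁻¹) * g p.2 = (∑' x, f x) * ∑' x, g x := by
    let e : G × G ≃ G × G :=
      ⟨fun p => (p.1 * p.2, p.2), fun p => (p.1 * p.2⁻¹, p.2), fun p => by simp, fun p => by simp⟩
    rw [hf.tsum_mul_tsum hg (hf.mul_of_nonneg hg hf0 hg0), ← e.tsum_eq]
    simp [e]
  exact htotal ▸ hF.hasSum.prod_fiberwise fun θ => (hF.prod_factor θ).hasSum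

theorem summable_mul_groupConv_and_tsum_le {v : G → ℝ} (hv0 : 0 ≤ v)
    (hv : ∀ x y, v (x * y) ≤ v x * v y) (hf0 : 0 ≤ f) (hg0 : 0 ≤ g) (hf : Summable (v * f))
    (hg : Summable (v * g)) :
    Summable (v * groupConv f g) ∧
      ∑' θ, v θ * groupConv f g θ ≤ (∑' x, v x * f x) * ∑' x, v x * g x := by
  have hvf0 : 0 ≤ v * f := mul_nonneg hv0 hf0
  have hvg0 : 0 ≤ v * g := mul_nonneg hv0 hg0
  have hconv := hasSum_groupConv hvf0 hvg0 hf hg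
  have hle : ∀ θ, v θ * groupConv f g θ ≤ groupConv (v * f) (v * g) θ := fun θ => by
    have hfib := (summable_groupConv_prod hvf0 hvg0 hf hg).prod_factor θ
    have hterm : ∀ h, v θ * (f (θ * h⁻¹) * g h) ≤ v (θ * h⁻¹) * f (θ * h⁻¹) * (v h * g h) :=
      fun h => by
        have := hv (θ * h⁻¹) h
        rw [inv_mul_cancel_right] at this
        nlinarith [mul_nonneg (hf0 (θ * h⁻¹)) (hg0 h)]
    rw [groupConv, ← tsum_mul_left]
    exact (hfib.of_nonneg_of_le (fun h => mul_nonneg (hv0 θ) (mul_nonneg (hf0 _) (hg0 h)))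
      hterm).tsum_le_tsum hterm hfib
  have hs : Summable (v * groupConv f g) :=
    hconv.summable.of_nonneg_of_le
      (fun θ => mul_nonneg (hv0 θ) (tsum_nonneg fun h => mul_nonneg (hf0 _) (hg0 h))) hle
  exact ⟨hs, (hs.tsum_le_tsum hle hconv.summable).trans_eq hconv.tsum_eq⟩

end Convolution

def weightedSum (wG : G → ℝ) (l : ℝ) (m : G → ℝ) : ℝ := ∑' θ, wG θ ^ l * m θ

theorem weightedSum_zero (wG : G → ℝ) (m : G → ℝ) : weightedSum wG 0 m = ∑' θ, m θ := by
  simp [weightedSum]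

/-- `m θ` dominates `sup_ξ ⟨ξ⟩^{-γ} |b_θ(ξ)|`, so that `weightedSum wG l m` bounds `⦀b⦀_l^{(γ)}`. -/
structure IsMajorant (w : Ξ → ℝ) (wG : G → ℝ) (b : G → Ξ → ℂ) (γ : ℝ) (m : G → ℝ) : Prop where
  nonneg : 0 ≤ m
  norm_le : ∀ θ ξ, ‖b θ ξ‖ ≤ w ξ ^ γ * m θ
  summable : ∀ l : ℝ, 0 ≤ l → Summable fun θ => wG θ ^ l * m θ

theorem IsMajorant.summable_self {w : Ξ → ℝ} {wG : G → ℝ} {b : G → Ξ → ℂ} {γ : ℝ} {m : G → ℝ}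
    (hm : IsMajorant w wG b γ m) : Summable m := by
  simpa using hm.summable 0 le_rfl

section Composition

variable [Group G] [MulAction G Ξ] {w : Ξ → ℝ} {wG : G → ℝ}

theorem IsAdmissibleWeight.rpow_add_mul (hW : IsAdmissibleWeight w wG) (l l' : ℝ) (m : G → ℝ)
    (θ : G) : wG θ ^ (l + l') * m θ = wG θ ^ l * (wG θ ^ l' * m θ) := by
  rw [Real.rpow_add (hW.pos_G θ), mul_assoc]

theorem snorm_nonneg (hW : IsAdmissibleWeight w wG) (b : G → Ξ → ℂ) (γ l : ℝ) :
    0 ≤ snorm w wG b γ l :=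
  tsum_nonneg fun θ => mul_nonneg (hW.rpow_nonneg_G l θ)
    (Real.iSup_nonneg fun ξ => mul_nonneg (hW.rpow_nonneg _ ξ) (norm_nonneg _))

namespace IsMajorant

variable {b : G → Ξ → ℂ} {γ : ℝ} {m : G → ℝ}

theorem weightedSum_nonneg (hW : IsAdmissibleWeight w wG) (hm : IsMajorant w wG b γ m) (l : ℝ) :
    0 ≤ weightedSum wG l m :=
  tsum_nonneg fun θ => mul_nonneg (hW.rpow_nonneg_G l θ) (hm.nonneg θ)

theorem norm_le_tsum (hW : IsAdmissibleWeight w wG) (hm : IsMajorant w wG b γ m) (θ : G) (ξ : Ξ) :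
    ‖b θ ξ‖ ≤ w ξ ^ γ * ∑' x, m x :=
  (hm.norm_le θ ξ).trans <| mul_le_mul_of_nonneg_left
    (hm.summable_self.le_tsum θ fun x _ => hm.nonneg x) (hW.rpow_nonneg γ ξ)

theorem rpow_neg_mul_norm_le (hW : IsAdmissibleWeight w wG) (hm : IsMajorant w wG b γ m)
    (θ : G) (ξ : Ξ) : w ξ ^ (-γ) * ‖b θ ξ‖ ≤ m θ :=
  calc w ξ ^ (-γ) * ‖b θ ξ‖ ≤ w ξ ^ (-γ) * (w ξ ^ γ * m θ) :=
        mul_le_mul_of_nonneg_left (hm.norm_le θ ξ) (hW.rpow_nonneg _ ξ)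
    _ = m θ := by
        rw [← mul_assoc, ← Real.rpow_add (hW.pos ξ), neg_add_cancel, Real.rpow_zero, one_mul]

theorem of_hasOrder (hW : IsAdmissibleWeight w wG) (hb : HasOrder w wG b γ) :
    IsMajorant w wG b γ fun θ => ⨆ ξ, w ξ ^ (-γ) * ‖b θ ξ‖ := by
  refine ⟨fun θ => Real.iSup_nonneg fun ξ => mul_nonneg (hW.rpow_nonneg _ ξ) (norm_nonneg _),
    fun θ ξ => ?_, hb.2⟩
  calc ‖b θ ξ‖ = w ξ ^ γ * (w ξ ^ (-γ) * ‖b θ ξ‖) := by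
        rw [← mul_assoc, ← Real.rpow_add (hW.pos ξ), add_neg_cancel, Real.rpow_zero, one_mul]
    _ ≤ w ξ ^ γ * ⨆ ξ, w ξ ^ (-γ) * ‖b θ ξ‖ :=
        mul_le_mul_of_nonneg_left (le_ciSup (hb.1 θ) ξ) (hW.rpow_nonneg γ ξ)

theorem hasOrder_and_snorm_le (hW : IsAdmissibleWeight w wG) (hm : IsMajorant w wG b γ m) :
    HasOrder w wG b γ ∧ ∀ l, 0 ≤ l → snorm w wG b γ l ≤ weightedSum wG l m := by
  have hle : ∀ (l : ℝ) θ, wG θ ^ l * ⨆ ξ, w ξ ^ (-γ) * ‖b θ ξ‖ ≤ wG θ ^ l * m θ := fun l θ =>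
    mul_le_mul_of_nonneg_left (Real.iSup_le (hm.rpow_neg_mul_norm_le hW θ) (hm.nonneg θ))
      (hW.rpow_nonneg_G l θ)
  have hs : ∀ l : ℝ, 0 ≤ l → Summable fun θ => wG θ ^ l * ⨆ ξ, w ξ ^ (-γ) * ‖b θ ξ‖ :=
    fun l hl => (hm.summable l hl).of_nonneg_of_le (fun θ => mul_nonneg (hW.rpow_nonneg_G l θ)
      (Real.iSup_nonneg fun ξ => mul_nonneg (hW.rpow_nonneg _ ξ) (norm_nonneg _))) (hle l)
  refine ⟨⟨fun θ => ⟨m θ, ?_⟩, hs⟩, fun l hl => (hs l hl).tsum_le_tsum (hle l) (hm.summable l hl)⟩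
  rintro _ ⟨ξ, rfl⟩
  exact hm.rpow_neg_mul_norm_le hW θ ξ

variable {a : G → Ξ → ℂ} {γa : ℝ} {A : G → ℝ}

theorem norm_compSymb_term_le (hW : IsAdmissibleWeight w wG) (ha : IsMajorant w wG a γa A)
    (hb : IsMajorant w wG b γ m) (θ : G) (ξ : Ξ) (h : G) :
    ‖a (θ * h⁻¹) (h • ξ) * b h ξ‖ ≤ w ξ ^ (γa + γ) * (A (θ * h⁻¹) * (wG h ^ |γa| * m h)) := by
  have ha' : ‖a (θ * h⁻¹) (h • ξ)‖ ≤ w ξ ^ γa * wG h ^ |γa| * A (θ * h⁻¹) :=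
    (ha.norm_le _ _).trans (mul_le_mul_of_nonneg_right (hW.rpow_smul_le γa h ξ) (ha.nonneg _))
  calc ‖a (θ * h⁻¹) (h • ξ) * b h ξ‖
      ≤ (w ξ ^ γa * wG h ^ |γa| * A (θ * h⁻¹)) * (w ξ ^ γ * m h) := by
        rw [norm_mul]
        exact mul_le_mul ha' (hb.norm_le h ξ) (norm_nonneg _) ((norm_nonneg _).trans ha')
    _ = w ξ ^ (γa + γ) * (A (θ * h⁻¹) * (wG h ^ |γa| * m h)) := by
        rw [Real.rpow_add (hW.pos ξ)]; ring

theorem summable_rpow_mul_rpow_mul (hW : IsAdmissibleWeight w wG) (hb : IsMajorant w wG b γ m)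
    (l' : ℝ) (hl' : 0 ≤ l') {l : ℝ} (hl : 0 ≤ l) :
    Summable fun h => wG h ^ l * (wG h ^ l' * m h) :=
  (hb.summable (l + l') (add_nonneg hl hl')).congr (hW.rpow_add_mul l l' m)

theorem summable_compSymb_term (hW : IsAdmissibleWeight w wG) (ha : IsMajorant w wG a γa A)
    (hb : IsMajorant w wG b γ m) (θ : G) (ξ : Ξ) :
    Summable fun h => a (θ * h⁻¹) (h • ξ) * b h ξ :=
  .of_norm_bounded ((summable_groupConv_apply ha.nonneg
    (fun h => mul_nonneg (hW.rpow_nonneg_G _ h) (hb.nonneg h)) ha.summable_self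
    (hb.summable _ (abs_nonneg γa)) θ).mul_left _)
    (ha.norm_compSymb_term_le hW hb θ ξ)

protected theorem compSymb (hW : IsAdmissibleWeight w wG) (ha : IsMajorant w wG a γa A)
    (hb : IsMajorant w wG b γ m) :
    IsMajorant w wG (compSymb a b) (γa + γ) (groupConv A fun h => wG h ^ |γa| * m h) := by
  have hm0 : 0 ≤ fun h => wG h ^ |γa| * m h := fun h =>
    mul_nonneg (hW.rpow_nonneg_G _ h) (hb.nonneg h)
  refine ⟨fun θ => tsum_nonneg fun h => mul_nonneg (ha.nonneg _) (hm0 h), fun θ ξ => ?_,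
    fun l hl => (summable_mul_groupConv_and_tsum_le (fun θ => hW.rpow_nonneg_G l θ)
      (hW.rpow_map_mul_le hl) ha.nonneg hm0 (ha.summable l hl)
      (hb.summable_rpow_mul_rpow_mul hW |γa| (abs_nonneg _) hl)).1⟩
  have hfib := summable_groupConv_apply ha.nonneg hm0 ha.summable_self
    (hb.summable _ (abs_nonneg γa)) θ
  have hle := ha.norm_compSymb_term_le hW hb θ ξ
  calc ‖compSymb a b θ ξ‖ ≤ ∑' h, ‖a (θ * h⁻¹) (h • ξ) * b h ξ‖ :=
        norm_tsum_le_tsum_norm ((hfib.mul_left _).of_nonneg_of_le (fun _ => norm_nonneg _) hle)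
    _ ≤ ∑' h, w ξ ^ (γa + γ) * (A (θ * h⁻¹) * (wG h ^ |γa| * m h)) :=
        ((hfib.mul_left _).of_nonneg_of_le (fun _ => norm_nonneg _) hle).tsum_le_tsum hle
          (hfib.mul_left _)
    _ = w ξ ^ (γa + γ) * groupConv A (fun h => wG h ^ |γa| * m h) θ := tsum_mul_left

theorem weightedSum_groupConv_le (hW : IsAdmissibleWeight w wG) (ha : IsMajorant w wG a γa A)
    (hb : IsMajorant w wG b γ m) {l : ℝ} (hl : 0 ≤ l) :
    weightedSum wG l (groupConv A fun h => wG h ^ |γa| * m h) ≤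
      weightedSum wG l A * weightedSum wG (l + |γa|) m := by
  have := (summable_mul_groupConv_and_tsum_le (fun θ => hW.rpow_nonneg_G l θ)
    (hW.rpow_map_mul_le hl)
    ha.nonneg (fun h => mul_nonneg (hW.rpow_nonneg_G _ h) (hb.nonneg h)) (ha.summable l hl)
    (hb.summable_rpow_mul_rpow_mul hW |γa| (abs_nonneg _) hl)).2
  simpa only [weightedSum, hW.rpow_add_mul] using this

end IsMajorant

theorem HasOrder.compSymb (hW : IsAdmissibleWeight w wG) {a b : G → Ξ → ℂ} {γa γb : ℝ}
    (ha : HasOrder w wG a γa) (hb : HasOrder w wG b γb) : HasOrder w wG (compSymb a b) (γa + γb) :=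
  ((IsMajorant.of_hasOrder hW ha).compSymb hW (.of_hasOrder hW hb)).hasOrder_and_snorm_le hW |>.1

theorem compSymb_const_mul_left (c : ℂ) (x b : G → Ξ → ℂ) :
    compSymb (fun θ ξ => c * x θ ξ) b = fun θ ξ => c * compSymb x b θ ξ := by
  funext θ ξ
  simp only [compSymb, ← tsum_mul_left, mul_assoc]

theorem compSymb_const_mul_right (c : ℂ) (a x : G → Ξ → ℂ) :
    compSymb a (fun θ ξ => c * x θ ξ) = fun θ ξ => c * compSymb a x θ ξ := by
  funext θ ξ
  simp only [compSymb, ← tsum_mul_left, mul_left_comm c]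

theorem compSymb_powSymb_zero_right (ψ b : G → Ξ → ℂ) : compSymb b (powSymb ψ 0) = b := by
  funext θ ξ
  rw [compSymb, tsum_eq_single 1 fun h hh => by simp [powSymb, hh]]
  simp [powSymb]

theorem compSymb_powSymb_zero_left (ψ b : G → Ξ → ℂ) : compSymb (powSymb ψ 0) b = b := by
  funext θ ξ
  rw [compSymb, tsum_eq_single θ fun h hh => by
    simp [powSymb, mul_inv_eq_one, Ne.symm hh]]
  simp [powSymb]

theorem compSymb_sum_left (hW : IsAdmissibleWeight w wG) {ι : Type*} (s : Finset ι) (c : ι → ℂ)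
    {x : ι → G → Ξ → ℂ} {γ : ℝ} (hx : ∀ i, HasOrder w wG (x i) γ) {b : G → Ξ → ℂ} {γb : ℝ}
    (hb : HasOrder w wG b γb) (θ : G) (ξ : Ξ) :
    compSymb (fun θ ξ => ∑ i ∈ s, c i * x i θ ξ) b θ ξ = ∑ i ∈ s, c i * compSymb (x i) b θ ξ := by
  have hterm i := (IsMajorant.of_hasOrder hW (hx i)).summable_compSymb_term hW
    (.of_hasOrder hW hb) θ ξ
  simp only [compSymb, Finset.sum_mul, mul_assoc]
  rw [Summable.tsum_finsetSum fun i _ => (hterm i).mul_left (c i)]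
  simp only [tsum_mul_left]

theorem compSymb_sum_right (hW : IsAdmissibleWeight w wG) {ι : Type*} (s : Finset ι) (c : ι → ℂ)
    {x : ι → G → Ξ → ℂ} {γ : ℝ} (hx : ∀ i, HasOrder w wG (x i) γ) {a : G → Ξ → ℂ} {γa : ℝ}
    (ha : HasOrder w wG a γa) (θ : G) (ξ : Ξ) :
    compSymb a (fun θ ξ => ∑ i ∈ s, c i * x i θ ξ) θ ξ = ∑ i ∈ s, c i * compSymb a (x i) θ ξ := by
  have hterm i := (IsMajorant.of_hasOrder hW ha).summable_compSymb_term hW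
    (.of_hasOrder hW (hx i)) θ ξ
  simp only [compSymb, Finset.mul_sum, mul_left_comm _ (c _)]
  rw [Summable.tsum_finsetSum fun i _ => (hterm i).mul_left (c i)]
  simp only [tsum_mul_left]

/-- Fubini on `G × ι × κ`; the factor `⟨h⟩^|γa|` pays for replacing `⟨h ▷ ξ⟩^γa` by `⟨ξ⟩^γa`,
which is why only the right-hand series needs weighted majorants. -/
theorem hasSum_compSymb_tsum_tsum (hW : IsAdmissibleWeight w wG) {ι κ : Type*}
    {a : ι → G → Ξ → ℂ} {γa : ℝ} {α : ι → ℝ} (ha : ∀ i θ ξ, ‖a i θ ξ‖ ≤ w ξ ^ γa * α i)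
    (hα0 : 0 ≤ α) (hα : Summable α)
    {b : κ → G → Ξ → ℂ} {γb : ℝ} {B : κ → G → ℝ} (hb : ∀ k θ ξ, ‖b k θ ξ‖ ≤ w ξ ^ γb * B k θ)
    (hB0 : 0 ≤ B) (hB : Summable fun p : κ × G => wG p.2 ^ |γa| * B p.1 p.2) (θ : G) (ξ : Ξ) :
    HasSum (fun p : ι × κ => compSymb (a p.1) (b p.2) θ ξ)
      (compSymb (fun θ ξ => ∑' i, a i θ ξ) (fun θ ξ => ∑' k, b k θ ξ) θ ξ) := by
  set F : G × (ι × κ) → ℂ := fun p => a p.2.1 (θ * p.1⁻¹) (p.1 • ξ) * b p.2.2 p.1 ξ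
  have hB'0 : ∀ p : κ × G, 0 ≤ wG p.2 ^ |γa| * B p.1 p.2 := fun p =>
    mul_nonneg (hW.rpow_nonneg_G _ _) (hB0 _ _)
  have hF : Summable F := by
    let e : G × (ι × κ) ≃ ι × (κ × G) :=
      ⟨fun p => (p.2.1, p.2.2, p.1), fun q => (q.2.2, q.1, q.2.1), fun _ => rfl, fun _ => rfl⟩
    refine .of_norm_bounded (g := fun p => w ξ ^ (γa + γb) *
      (α (e p).1 * (wG (e p).2.2 ^ |γa| * B (e p).2.1 (e p).2.2))) ?_ fun ⟨h, i, k⟩ => ?_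
    · exact ((e.summable_iff.mpr (hα.mul_of_nonneg hB hα0 hB'0)).mul_left _)
    · have hai := (ha i (θ * h⁻¹) (h • ξ)).trans
        (mul_le_mul_of_nonneg_right (hW.rpow_smul_le γa h ξ) (hα0 i))
      calc ‖F (h, i, k)‖ ≤ (w ξ ^ γa * wG h ^ |γa| * α i) * (w ξ ^ γb * B k h) := by
            rw [norm_mul]
            exact mul_le_mul hai (hb k h ξ) (norm_nonneg _) ((norm_nonneg _).trans hai)
        _ = _ := by simp only [e, Equiv.coe_fn_mk, Real.rpow_add (hW.pos ξ)]; ring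
  have hsum : ∑' p, F p = compSymb (fun θ ξ => ∑' i, a i θ ξ) (fun θ ξ => ∑' k, b k θ ξ) θ ξ := by
    rw [hF.tsum_prod' hF.prod_factor]
    refine tsum_congr fun h => (tsum_mul_tsum_of_summable_norm
      (f := fun i => a i (θ * h⁻¹) (h • ξ)) (g := fun k => b k h ξ) ?_ ?_).symm
    · exact (hα.mul_left _).of_nonneg_of_le (fun _ => norm_nonneg _) fun i => ha i _ _
    · refine ((hB.prod_symm.prod_factor h).mul_left (w ξ ^ γb)).of_nonneg_of_le
        (fun _ => norm_nonneg _) fun k => (hb k h ξ).trans ?_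
      exact mul_le_mul_of_nonneg_left (le_mul_of_one_le_left (hB0 k h)
        (hW.one_le_rpow_G (abs_nonneg _) h)) (hW.rpow_nonneg _ ξ)
  rw [← hsum, ← (Equiv.prodComm _ _).tsum_eq F]
  exact hF.prod_symm.hasSum.prod_fiberwise fun q => (hF.prod_symm.prod_factor q).hasSum

theorem hasSum_compSymb_tsum_right (hW : IsAdmissibleWeight w wG) {κ : Type*}
    {a : G → Ξ → ℂ} {γa α : ℝ} (ha : ∀ θ ξ, ‖a θ ξ‖ ≤ w ξ ^ γa * α) (hα0 : 0 ≤ α)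
    {b : κ → G → Ξ → ℂ} {γb : ℝ} {B : κ → G → ℝ} (hb : ∀ k θ ξ, ‖b k θ ξ‖ ≤ w ξ ^ γb * B k θ)
    (hB0 : 0 ≤ B) (hB : Summable fun p : κ × G => wG p.2 ^ |γa| * B p.1 p.2) (θ : G) (ξ : Ξ) :
    HasSum (fun k => compSymb a (b k) θ ξ) (compSymb a (fun θ ξ => ∑' k, b k θ ξ) θ ξ) := by
  have h := hasSum_compSymb_tsum_tsum hW (ι := Unit) (a := fun _ => a) (α := fun _ => α)
    (fun _ => ha) (fun _ => hα0) (.of_finite) hb hB0 hB θ ξ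
  have h' := (Equiv.punitProd κ).symm.hasSum_iff.mpr h
  simp only [tsum_const, Nat.card_unique, one_smul] at h'
  exact h'

theorem compSymb_assoc (hW : IsAdmissibleWeight w wG) {a b c : G → Ξ → ℂ} {γa γb γc : ℝ}
    (ha : HasOrder w wG a γa) (hb : HasOrder w wG b γb) (hc : HasOrder w wG c γc) :
    compSymb a (compSymb b c) = compSymb (compSymb a b) c := by
  obtain ⟨A, hA⟩ : ∃ A, IsMajorant w wG a γa A := ⟨_, .of_hasOrder hW ha⟩
  obtain ⟨B, hB⟩ : ∃ B, IsMajorant w wG b γb B := ⟨_, .of_hasOrder hW hb⟩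
  obtain ⟨C, hC⟩ : ∃ C, IsMajorant w wG c γc C := ⟨_, .of_hasOrder hW hc⟩
  -- `compSymb b c` is the series over `g` of the symbols `(h, η) ↦ b (h g⁻¹) (g ▷ η) c g η`
  have hxle : ∀ (g h : G) (η : Ξ), ‖b (h * g⁻¹) (g • η) * c g η‖ ≤
      w η ^ (γb + γc) * (wG g ^ |γb| * B (h * g⁻¹) * C g) := fun g h η => by
    have hb' := (hB.norm_le (h * g⁻¹) (g • η)).trans
      (mul_le_mul_of_nonneg_right (hW.rpow_smul_le γb g η) (hB.nonneg _))
    calc ‖b (h * g⁻¹) (g • η) * c g η‖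
        ≤ (w η ^ γb * wG g ^ |γb| * B (h * g⁻¹)) * (w η ^ γc * C g) := by
          rw [norm_mul]
          exact mul_le_mul hb' (hC.norm_le g η) (norm_nonneg _) ((norm_nonneg _).trans hb')
      _ = _ := by rw [Real.rpow_add (hW.pos η)]; ring
  have hx0 : 0 ≤ fun (g h : G) => wG g ^ |γb| * B (h * g⁻¹) * C g := fun g h =>
    mul_nonneg (mul_nonneg (hW.rpow_nonneg_G _ g) (hB.nonneg _)) (hC.nonneg g)
  have hxs : Summable fun p : G × G =>
      wG p.2 ^ |γa| * (wG p.1 ^ |γb| * B (p.2 * p.1⁻¹) * C p.1) := by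
    have hconv := (summable_groupConv_prod
      (fun h => mul_nonneg (hW.rpow_nonneg_G _ h) (hB.nonneg h))
      (fun g => mul_nonneg (hW.rpow_nonneg_G _ g) (hC.nonneg g))
      (hB.summable _ (abs_nonneg γa))
      (hC.summable _ (add_nonneg (abs_nonneg γa) (abs_nonneg γb)))).prod_symm
    refine hconv.of_nonneg_of_le (fun p => mul_nonneg (hW.rpow_nonneg_G _ _) (hx0 _ _))
      fun ⟨g, h⟩ => ?_
    have hsplit := hW.rpow_map_mul_le (abs_nonneg γa) (h * g⁻¹) g
    rw [inv_mul_cancel_right] at hsplit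
    calc wG h ^ |γa| * (wG g ^ |γb| * B (h * g⁻¹) * C g)
        ≤ wG (h * g⁻¹) ^ |γa| * wG g ^ |γa| * (wG g ^ |γb| * B (h * g⁻¹) * C g) :=
          mul_le_mul_of_nonneg_right hsplit (hx0 g h)
      _ = _ := by simp only [Prod.swap, Real.rpow_add (hW.pos_G g)]; ring
  funext θ ξ
  refine (hasSum_compSymb_tsum_right hW (hA.norm_le_tsum hW) (tsum_nonneg hA.nonneg)
    (b := fun g h η => b (h * g⁻¹) (g • η) * c g η) hxle hx0 hxs θ ξ).tsum_eq.symm.trans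
    (tsum_congr fun g => ?_)
  simp only [compSymb]
  rw [← tsum_mul_right, ← (Equiv.mulRight g).tsum_eq]
  refine tsum_congr fun h => ?_
  simp only [Equiv.coe_mulRight, mul_inv_rev, mul_assoc, mul_inv_cancel, mul_one, mul_smul]

theorem isMajorant_powSymb_zero (ψ : G → Ξ → ℂ) :
    IsMajorant w wG (powSymb ψ 0) 0 fun θ => if θ = 1 then 1 else 0 := by
  refine ⟨fun θ => by dsimp only; split_ifs <;> norm_num, fun θ ξ => ?_, fun l _ => ?_⟩
  · simp only [powSymb, Real.rpow_zero, one_mul]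
    split_ifs <;> simp
  · exact summable_of_ne_finset_zero (s := {1}) fun θ hθ => by simp_all

theorem exists_isMajorant_powSymb (hW : IsAdmissibleWeight w wG) {ψ : G → Ξ → ℂ} {P : G → ℝ}
    (hP : IsMajorant w wG ψ 0 P) (k : ℕ) :
    ∃ Pk, IsMajorant w wG (powSymb ψ k) 0 Pk ∧
      ∀ l, 0 ≤ l → weightedSum wG l Pk ≤ weightedSum wG l P ^ k := by
  induction k with
  | zero =>
    refine ⟨_, isMajorant_powSymb_zero ψ, fun l _ => le_of_eq ?_⟩
    rw [weightedSum, tsum_eq_single 1 fun θ hθ => by simp [hθ]]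
    simp [hW.map_one]
  | succ k ih =>
    obtain ⟨Pk, hPk, hle⟩ := ih
    have hcomp := hP.compSymb hW hPk
    rw [add_zero] at hcomp
    refine ⟨_, hcomp, fun l hl => (hP.weightedSum_groupConv_le hW hPk hl).trans ?_⟩
    rw [abs_zero, add_zero, pow_succ']
    exact mul_le_mul_of_nonneg_left (hle l hl) (hP.weightedSum_nonneg hW l)

theorem HasOrder.powSymb (hW : IsAdmissibleWeight w wG) {ψ : G → Ξ → ℂ}
    (hψ : HasOrder w wG ψ 0) (k : ℕ) : HasOrder w wG (powSymb ψ k) 0 :=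
  have ⟨_, hPk, _⟩ := exists_isMajorant_powSymb hW (.of_hasOrder hW hψ) k
  (hPk.hasOrder_and_snorm_le hW).1

theorem powSymb_one (ψ : G → Ξ → ℂ) : powSymb ψ 1 = ψ :=
  compSymb_powSymb_zero_right ψ ψ

theorem powSymb_add (hW : IsAdmissibleWeight w wG) {ψ : G → Ξ → ℂ} (hψ : HasOrder w wG ψ 0)
    (j m : ℕ) : powSymb ψ (j + m) = compSymb (powSymb ψ j) (powSymb ψ m) := by
  induction j with
  | zero => rw [zero_add, compSymb_powSymb_zero_left]
  | succ j ih =>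
    rw [add_right_comm]
    change compSymb ψ (powSymb ψ (j + m)) = compSymb (compSymb ψ (powSymb ψ j)) (powSymb ψ m)
    rw [ih, compSymb_assoc hW hψ (hψ.powSymb hW j) (hψ.powSymb hW m)]

end Composition

theorem HasSum.sum_antidiagonal {M : Type*} [AddCommMonoid M] [TopologicalSpace M]
    [ContinuousAdd M] [RegularSpace M] {f : ℕ × ℕ → M} {s : M} (h : HasSum f s) :
    HasSum (fun n => ∑ p ∈ antidiagonal n, f p) s :=
  (Finset.HasAntidiagonal.sigmaAntidiagonalEquivProd.hasSum_iff.mpr h).sigma fun n =>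
    (antidiagonal n).hasSum f

theorem summable_inv_factorial_mul {s : ℕ → ℝ} {C D : ℝ} (h0 : ∀ k, 0 ≤ s k)
    (hle : ∀ k, s k ≤ C ^ k * D) : Summable fun k => (k ! : ℝ)⁻¹ * s k :=
  ((Real.summable_pow_div_factorial C).mul_right D).of_nonneg_of_le
    (fun k => mul_nonneg (by positivity) (h0 k)) fun k => by
      rw [div_eq_inv_mul, mul_assoc]
      exact mul_le_mul_of_nonneg_left (hle k) (by positivity)

theorem summable_prod_inv_factorial_mul {β : Type*} {M : ℕ → β → ℝ} {C D : ℝ}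
    (h0 : ∀ k x, 0 ≤ M k x) (hM : ∀ k, Summable (M k)) (hle : ∀ k, ∑' x, M k x ≤ C ^ k * D) :
    Summable fun p : ℕ × β => (p.1 ! : ℝ)⁻¹ * M p.1 p.2 := by
  refine (summable_prod_of_nonneg fun p => mul_nonneg (by positivity) (h0 p.1 p.2)).mpr
    ⟨fun k => (hM k).mul_left (k ! : ℝ)⁻¹, ?_⟩
  simp only [tsum_mul_left]
  exact summable_inv_factorial_mul (fun k => tsum_nonneg (h0 k)) hle

theorem norm_pow_div_factorial_mul_le {z x : ℂ} {r : ℝ} (k : ℕ) (h : ‖x‖ ≤ r) :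
    ‖z ^ k / (k ! : ℂ) * x‖ ≤ (k ! : ℝ)⁻¹ * (‖z‖ ^ k * r) := by
  rw [norm_mul, norm_div, norm_pow, Complex.norm_natCast, div_eq_inv_mul, mul_assoc]
  gcongr

theorem pow_div_factorial_mul_pow_div_factorial (z z' : ℂ) (i j : ℕ) :
    z ^ i / (i ! : ℂ) * (z' ^ j / (j ! : ℂ)) =
      ((i + j) ! : ℂ)⁻¹ * ((i + j).choose i * (z ^ i * z' ^ j)) := by
  have hc : ((i + j).choose j : ℂ) ≠ 0 := by exact_mod_cast (Nat.choose_pos (by omega)).ne'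
  rw [Nat.choose_symm_add, ← Nat.add_choose_mul_factorial_mul_factorial i j]
  push_cast
  field_simp

theorem sum_antidiagonal_pow_div_factorial (z z' : ℂ) (n : ℕ) :
    ∑ p ∈ antidiagonal n, z ^ p.1 / (p.1 ! : ℂ) * (z' ^ p.2 / (p.2 ! : ℂ)) =
      (z + z') ^ n / (n ! : ℂ) := by
  rw [(Commute.all z z').add_pow', div_eq_inv_mul, Finset.mul_sum]
  refine Finset.sum_congr rfl fun p hp => ?_
  rw [pow_div_factorial_mul_pow_div_factorial, mem_antidiagonal.mp hp, nsmul_eq_mul]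

theorem IsMajorant.norm_pow_div_factorial_mul_le {w : Ξ → ℝ} {wG : G → ℝ} {r : G → Ξ → ℂ} {γ : ℝ}
    {R : G → ℝ} (hR : IsMajorant w wG r γ R) (z : ℂ) (m : ℕ) (θ : G) (ξ : Ξ) :
    ‖z ^ m / (m ! : ℂ) * r θ ξ‖ ≤ w ξ ^ γ * ((m ! : ℝ)⁻¹ * (‖z‖ ^ m * R θ)) :=
  (_root_.norm_pow_div_factorial_mul_le m (hR.norm_le θ ξ)).trans_eq (by ring)

section Exponential

variable [Group G] [MulAction G Ξ] {w : Ξ → ℝ} {wG : G → ℝ}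

theorem summable_weighted_pow_div_factorial (hW : IsAdmissibleWeight w wG) {r : ℕ → G → Ξ → ℂ}
    {γ : ℝ} {R : ℕ → G → ℝ} (hR : ∀ m, IsMajorant w wG (r m) γ (R m)) {l : ℝ} (hl : 0 ≤ l)
    {C D : ℝ} (hle : ∀ m, weightedSum wG l (R m) ≤ C ^ m * D) (z : ℂ) :
    Summable fun p : ℕ × G => wG p.2 ^ l * ((p.1 ! : ℝ)⁻¹ * (‖z‖ ^ p.1 * R p.1 p.2)) := by
  have h := summable_prod_inv_factorial_mul (M := fun m h => ‖z‖ ^ m * (wG h ^ l * R m h))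
    (C := ‖z‖ * C) (D := D)
    (fun m h => mul_nonneg (by positivity) (mul_nonneg (hW.rpow_nonneg_G l h) ((hR m).nonneg h)))
    (fun m => ((hR m).summable l hl).mul_left _) fun m => by
      rw [tsum_mul_left, mul_pow, mul_assoc]
      exact mul_le_mul_of_nonneg_left (hle m) (by positivity)
  exact h.congr fun p => by ring

theorem hasSum_compSymb_expSymb (hW : IsAdmissibleWeight w wG) {ψ : G → Ξ → ℂ} {P : G → ℝ}
    (hP : IsMajorant w wG ψ 0 P) (z z' : ℂ) {r : ℕ → G → Ξ → ℂ} {γ : ℝ} {R : ℕ → G → ℝ}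
    (hR : ∀ m, IsMajorant w wG (r m) γ (R m)) {C D : ℝ} (hle : ∀ m, ∑' θ, R m θ ≤ C ^ m * D)
    (θ : G) (ξ : Ξ) :
    HasSum (fun p : ℕ × ℕ => z ^ p.1 / (p.1 ! : ℂ) * (z' ^ p.2 / (p.2 ! : ℂ)) *
        compSymb (powSymb ψ p.1) (r p.2) θ ξ)
      (compSymb (expSymb z ψ) (fun θ ξ => ∑' m, z' ^ m / (m ! : ℂ) * r m θ ξ) θ ξ) := by
  choose Pk hPk hPkle using exists_isMajorant_powSymb hW hP
  have hPk0 : ∀ j, ∑' θ, Pk j θ ≤ (∑' θ, P θ) ^ j := fun j => by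
    simpa only [weightedSum_zero] using hPkle j 0 le_rfl
  have ha : ∀ j θ ξ, ‖z ^ j / (j ! : ℂ) * powSymb ψ j θ ξ‖ ≤
      w ξ ^ (0 : ℝ) * ((j ! : ℝ)⁻¹ * (‖z‖ ^ j * (∑' θ, P θ) ^ j)) := fun j θ ξ => by
    rw [Real.rpow_zero, one_mul]
    refine norm_pow_div_factorial_mul_le j ((((hPk j).norm_le_tsum hW θ ξ)).trans ?_)
    rw [Real.rpow_zero, one_mul]
    exact hPk0 j
  have hs := hasSum_compSymb_tsum_tsum hW ha
    (fun j => mul_nonneg (by positivity) (mul_nonneg (by positivity)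
      (pow_nonneg (tsum_nonneg (hP.nonneg)) j)))
    (summable_inv_factorial_mul (C := ‖z‖ * ∑' θ, P θ) (D := 1)
      (fun j => mul_nonneg (by positivity) (pow_nonneg (tsum_nonneg (hP.nonneg)) j))
      fun j => by rw [mul_pow, mul_one])
    (fun m => (hR m).norm_pow_div_factorial_mul_le z' m)
    (fun m θ => mul_nonneg (by positivity) (mul_nonneg (by positivity) ((hR m).nonneg θ)))
    (summable_weighted_pow_div_factorial hW hR (abs_nonneg 0)
      (fun m => by simpa only [abs_zero, weightedSum_zero] using hle m) z') θ ξ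
  simp only [compSymb_const_mul_left, compSymb_const_mul_right] at hs
  convert hs using 1
  · funext p
    ring
  · rfl

theorem compSymb_expSymb_expSymb (hW : IsAdmissibleWeight w wG) {ψ : G → Ξ → ℂ} {P : G → ℝ}
    (hP : IsMajorant w wG ψ 0 P) (z z' : ℂ) :
    compSymb (expSymb z ψ) (expSymb z' ψ) = expSymb (z + z') ψ := by
  choose Pk hPk hPkle using exists_isMajorant_powSymb hW hP
  have hψ : HasOrder w wG ψ 0 := (hP.hasOrder_and_snorm_le hW).1
  funext θ ξ
  have hs := (hasSum_compSymb_expSymb hW hP z z' hPk (C := ∑' θ, P θ) (D := 1) (fun m => by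
    simpa only [weightedSum_zero, mul_one] using hPkle m 0 le_rfl) θ ξ).sum_antidiagonal
  refine hs.tsum_eq.symm.trans (tsum_congr fun n => ?_)
  calc ∑ p ∈ antidiagonal n, z ^ p.1 / (p.1 ! : ℂ) * (z' ^ p.2 / (p.2 ! : ℂ)) *
        compSymb (powSymb ψ p.1) (powSymb ψ p.2) θ ξ
      = ∑ p ∈ antidiagonal n, z ^ p.1 / (p.1 ! : ℂ) * (z' ^ p.2 / (p.2 ! : ℂ)) *
        powSymb ψ n θ ξ := Finset.sum_congr rfl fun p hp => by
          rw [← powSymb_add hW hψ, mem_antidiagonal.mp hp]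
    _ = (z + z') ^ n / (n ! : ℂ) * powSymb ψ n θ ξ := by
          rw [← Finset.sum_mul, sum_antidiagonal_pow_div_factorial]

theorem expSymb_zero (ψ : G → Ξ → ℂ) (θ : G) (ξ : Ξ) :
    expSymb 0 ψ θ ξ = if θ = 1 then 1 else 0 := by
  rw [expSymb, tsum_eq_single 0 fun k hk => by simp [zero_pow hk]]
  simp [powSymb]

theorem compSymb_expSymb_expSymb_of_add_eq_zero (hW : IsAdmissibleWeight w wG)
    {ψ : G → Ξ → ℂ} (hψ : HasOrder w wG ψ 0) {z z' : ℂ} (h : z + z' = 0) (θ : G) (ξ : Ξ) :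
    compSymb (expSymb z ψ) (expSymb z' ψ) θ ξ = if θ = 1 then 1 else 0 := by
  rw [compSymb_expSymb_expSymb hW (.of_hasOrder hW hψ), h, expSymb_zero]

theorem compSymb_expSymb_eq_tsum (hW : IsAdmissibleWeight w wG) {ψ a : G → Ξ → ℂ} {P A : G → ℝ}
    {α : ℝ} (hP : IsMajorant w wG ψ 0 P) (hA : IsMajorant w wG a α A) (z : ℂ) :
    compSymb a (expSymb z ψ) =
      fun θ ξ => ∑' m, z ^ m / (m ! : ℂ) * compSymb a (powSymb ψ m) θ ξ := by
  choose Pk hPk hPkle using exists_isMajorant_powSymb hW hP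
  funext θ ξ
  have hs := hasSum_compSymb_tsum_right hW (hA.norm_le_tsum hW) (tsum_nonneg hA.nonneg)
    (b := fun m θ ξ => z ^ m / (m ! : ℂ) * powSymb ψ m θ ξ)
    (fun m => (hPk m).norm_pow_div_factorial_mul_le z m)
    (fun m θ => mul_nonneg (by positivity) (mul_nonneg (by positivity) ((hPk m).nonneg θ)))
    (summable_weighted_pow_div_factorial hW hPk (abs_nonneg α) (D := 1)
      (fun m => by simpa only [mul_one] using hPkle m |α| (abs_nonneg α)) z) θ ξ
  simp only [compSymb_const_mul_right] at hs
  exact hs.tsum_eq.symm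

end Exponential

def sandwichSymb [Group G] [MulAction G Ξ] (ψ a : G → Ξ → ℂ) (j m : ℕ) : G → Ξ → ℂ :=
  compSymb (powSymb ψ j) (compSymb a (powSymb ψ m))

section Commutator

variable [Group G] [MulAction G Ξ] {w : Ξ → ℝ} {wG : G → ℝ} {ψ a : G → Ξ → ℂ} {α : ℝ}

theorem HasOrder.sandwichSymb (hW : IsAdmissibleWeight w wG) (hψ : HasOrder w wG ψ 0)
    (ha : HasOrder w wG a α) (j m : ℕ) : HasOrder w wG (sandwichSymb ψ a j m) α := by
  simpa only [_root_.sandwichSymb, zero_add, add_zero] using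
    (hψ.powSymb hW j).compSymb hW (ha.compSymb hW (hψ.powSymb hW m))

theorem sandwichSymb_compSymb (hW : IsAdmissibleWeight w wG) (hψ : HasOrder w wG ψ 0)
    (ha : HasOrder w wG a α) (j m : ℕ) :
    compSymb (sandwichSymb ψ a j m) ψ = sandwichSymb ψ a j (m + 1) := by
  rw [sandwichSymb, sandwichSymb,
    ← compSymb_assoc hW (hψ.powSymb hW j) (ha.compSymb hW (hψ.powSymb hW m)) hψ,
    ← compSymb_assoc hW ha (hψ.powSymb hW m) hψ, powSymb_add hW hψ m 1, powSymb_one]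

theorem compSymb_sandwichSymb (hW : IsAdmissibleWeight w wG) (hψ : HasOrder w wG ψ 0)
    (ha : HasOrder w wG a α) (j m : ℕ) :
    compSymb ψ (sandwichSymb ψ a j m) = sandwichSymb ψ a (j + 1) m :=
  compSymb_assoc hW hψ (hψ.powSymb hW j) (ha.compSymb hW (hψ.powSymb hW m))

/-- The binomial expansion of `ad^k(A; Ψ) = i^k (R - L)^k A`, where `R X = X Ψ` and `L X = Ψ X`
commute. -/
theorem iterate_adSymb_eq_sum (hW : IsAdmissibleWeight w wG) (hψ : HasOrder w wG ψ 0)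
    (ha : HasOrder w wG a α) (k : ℕ) (θ : G) (ξ : Ξ) :
    (fun s => adSymb s ψ)^[k] a θ ξ = ∑ p ∈ antidiagonal k,
      (k.choose p.1 : ℂ) * ((-Complex.I) ^ p.1 * Complex.I ^ p.2) *
        sandwichSymb ψ a p.1 p.2 θ ξ := by
  induction k generalizing θ ξ with
  | zero =>
    simp [sandwichSymb, compSymb_powSymb_zero_left, compSymb_powSymb_zero_right]
  | succ k ih =>
    have hpascal := Finset.sum_antidiagonal_choose_succ_mul
      (fun i j => (-Complex.I) ^ i * (Complex.I ^ j * sandwichSymb ψ a i j θ ξ)) k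
    have hT := HasOrder.sandwichSymb hW hψ ha
    have hX : (fun s => adSymb s ψ)^[k] a = fun θ ξ => ∑ p ∈ antidiagonal k,
        (k.choose p.1 : ℂ) * ((-Complex.I) ^ p.1 * Complex.I ^ p.2) *
          sandwichSymb ψ a p.1 p.2 θ ξ :=
      funext fun θ => funext fun ξ => ih θ ξ
    rw [Function.iterate_succ_apply', hX]
    change Complex.I * (compSymb _ ψ θ ξ - compSymb ψ _ θ ξ) = _
    have hleft := compSymb_sum_left hW (antidiagonal k)
      (fun p => (k.choose p.1 : ℂ) * ((-Complex.I) ^ p.1 * Complex.I ^ p.2))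
      (fun p : ℕ × ℕ => hT p.1 p.2) hψ θ ξ
    have hright := compSymb_sum_right hW (antidiagonal k)
      (fun p => (k.choose p.1 : ℂ) * ((-Complex.I) ^ p.1 * Complex.I ^ p.2))
      (fun p : ℕ × ℕ => hT p.1 p.2) hψ θ ξ
    rw [hleft, hright]
    simp only [sandwichSymb_compSymb hW hψ ha, compSymb_sandwichSymb hW hψ ha, mul_assoc]
      at hpascal ⊢
    rw [hpascal, mul_sub, Finset.mul_sum, Finset.mul_sum, sub_eq_add_neg, ← Finset.sum_neg_distrib]
    congr 1 <;> refine Finset.sum_congr rfl fun p hp => ?_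
    · ring
    · rw [Nat.choose_symm_of_eq_add (mem_antidiagonal.mp hp).symm]
      ring

theorem IsMajorant.adSymb (hW : IsAdmissibleWeight w wG) {x : G → Ξ → ℂ} {X P : G → ℝ}
    (hx : IsMajorant w wG x α X) (hP : IsMajorant w wG ψ 0 P) :
    IsMajorant w wG (adSymb x ψ) α (groupConv X (fun h => wG h ^ |α| * P h) + groupConv P X) ∧
      ∀ l, 0 ≤ l → weightedSum wG l (groupConv X (fun h => wG h ^ |α| * P h) + groupConv P X) ≤
        weightedSum wG l X * (weightedSum wG (l + |α|) P + weightedSum wG l P) := by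
  have h₁ := hx.compSymb hW hP
  have h₂ := hP.compSymb hW hx
  rw [add_zero] at h₁
  simp only [zero_add, abs_zero, Real.rpow_zero, one_mul] at h₂
  refine ⟨⟨add_nonneg h₁.nonneg h₂.nonneg, fun θ ξ => ?_, fun l hl =>
    ((h₁.summable l hl).add (h₂.summable l hl)).congr fun θ => (mul_add _ _ _).symm⟩,
    fun l hl => ?_⟩
  · rw [_root_.adSymb, norm_mul, Complex.norm_I, one_mul, Pi.add_apply, mul_add]
    exact (norm_sub_le _ _).trans (add_le_add (h₁.norm_le θ ξ) (h₂.norm_le θ ξ))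
  · have hsplit : weightedSum wG l (groupConv X (fun h => wG h ^ |α| * P h) + groupConv P X) =
        weightedSum wG l (groupConv X (fun h => wG h ^ |α| * P h)) +
          weightedSum wG l (groupConv P X) := by
      simp only [weightedSum, Pi.add_apply, mul_add]
      exact (h₁.summable l hl).tsum_add (h₂.summable l hl)
    have hb₁ := hx.weightedSum_groupConv_le hW hP hl
    have hb₂ := hP.weightedSum_groupConv_le hW hx hl
    simp only [abs_zero, add_zero, Real.rpow_zero, one_mul] at hb₂
    rw [hsplit, mul_add]
    linarith [mul_comm (weightedSum wG l P) (weightedSum wG l X)]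

theorem exists_isMajorant_iterate_adSymb (hW : IsAdmissibleWeight w wG) {P A : G → ℝ}
    (hP : IsMajorant w wG ψ 0 P) (hA : IsMajorant w wG a α A) (k : ℕ) :
    ∃ M, IsMajorant w wG ((fun s => adSymb s ψ)^[k] a) α M ∧ ∀ l, 0 ≤ l →
      weightedSum wG l M ≤
        (weightedSum wG (l + |α|) P + weightedSum wG l P) ^ k * weightedSum wG l A := by
  induction k with
  | zero => exact ⟨A, hA, fun l _ => by rw [pow_zero, one_mul]⟩
  | succ k ih =>
    obtain ⟨M, hM, hle⟩ := ih
    obtain ⟨hM', hle'⟩ := hM.adSymb hW hP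
    rw [Function.iterate_succ_apply']
    refine ⟨_, hM', fun l hl => (hle' l hl).trans ?_⟩
    rw [pow_succ, mul_right_comm]
    exact mul_le_mul_of_nonneg_right (hle l hl)
      (add_nonneg (hP.weightedSum_nonneg hW _) (hP.weightedSum_nonneg hW _))

theorem hasSum_iterate_adSymb (hW : IsAdmissibleWeight w wG) (hψ : HasOrder w wG ψ 0)
    (ha : HasOrder w wG a α) (θ : G) (ξ : Ξ) :
    HasSum (fun k => (k ! : ℂ)⁻¹ * (fun s => adSymb s ψ)^[k] a θ ξ)
      (compSymb (expSymb (-Complex.I) ψ) (compSymb a (expSymb Complex.I ψ)) θ ξ) := by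
  obtain ⟨P, hP⟩ : ∃ P, IsMajorant w wG ψ 0 P := ⟨_, .of_hasOrder hW hψ⟩
  obtain ⟨A, hA⟩ : ∃ A, IsMajorant w wG a α A := ⟨_, .of_hasOrder hW ha⟩
  choose Pk hPk hPkle using exists_isMajorant_powSymb hW hP
  have hle : ∀ m, ∑' θ, groupConv A (fun h => wG h ^ |α| * Pk m h) θ ≤
      weightedSum wG |α| P ^ m * ∑' θ, A θ := fun m => by
    have := hA.weightedSum_groupConv_le hW (hPk m) le_rfl
    rw [zero_add, weightedSum_zero, weightedSum_zero] at this
    exact this.trans_eq (mul_comm _ _) |>.trans (mul_le_mul_of_nonneg_right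
      (hPkle m |α| (abs_nonneg α)) (tsum_nonneg hA.nonneg))
  rw [compSymb_expSymb_eq_tsum hW hP hA]
  convert (hasSum_compSymb_expSymb hW hP (-Complex.I) Complex.I
    (fun m => hA.compSymb hW (hPk m)) hle θ ξ).sum_antidiagonal using 1
  funext k
  rw [iterate_adSymb_eq_sum hW hψ ha, Finset.mul_sum]
  refine Finset.sum_congr rfl fun p hp => ?_
  rw [pow_div_factorial_mul_pow_div_factorial, mem_antidiagonal.mp hp, sandwichSymb]
  ring

theorem summable_snorm_powSymb (hW : IsAdmissibleWeight w wG) (hψ : HasOrder w wG ψ 0) {l : ℝ}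
    (hl : 0 ≤ l) : Summable fun k => (k ! : ℝ)⁻¹ * snorm w wG (powSymb ψ k) 0 l := by
  choose Pk hPk hPkle using exists_isMajorant_powSymb hW (.of_hasOrder hW hψ)
  exact summable_inv_factorial_mul (D := 1) (fun k => snorm_nonneg hW _ _ _) fun k =>
    ((hPk k).hasOrder_and_snorm_le hW).2 l hl |>.trans (by simpa using hPkle k l hl)

theorem summable_snorm_iterate_adSymb (hW : IsAdmissibleWeight w wG) (hψ : HasOrder w wG ψ 0)
    (ha : HasOrder w wG a α) {l : ℝ} (hl : 0 ≤ l) :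
    Summable fun k => (k ! : ℝ)⁻¹ * snorm w wG ((fun s => adSymb s ψ)^[k] a) α l := by
  choose M hM hMle using
    exists_isMajorant_iterate_adSymb hW (.of_hasOrder hW hψ) (.of_hasOrder hW ha)
  exact summable_inv_factorial_mul (fun k => snorm_nonneg hW _ _ _) fun k =>
    ((hM k).hasOrder_and_snorm_le hW).2 l hl |>.trans (hMle k l hl)

end Commutator

theorem stmt12_general [Group G] [MulAction G Ξ]
    (w : Ξ → ℝ) (hw : ∀ ξ, 1 ≤ w ξ)
    (wG : G → ℝ) (hwG : ∀ g : G, wG g = 1 + ⨆ ξ : Ξ, |w (g • ξ) - w ξ|)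
    (hbdd : ∀ g : G, BddAbove (Set.range fun ξ : Ξ => |w (g • ξ) - w ξ|))
    (ψ : G → Ξ → ℂ)
    (hordψ : HasOrder w wG ψ 0)
    (a : G → Ξ → ℂ)
    (α : ℝ) (horda : HasOrder w wG a α) :
    (∀ l : ℝ, 0 ≤ l →
        Summable fun k : ℕ =>
          (Nat.factorial k : ℝ)⁻¹ * snorm w wG (powSymb ψ k) 0 l) ∧
      (∀ (θ : G) (ξ : Ξ),
        compSymb (expSymb (-Complex.I) ψ) (expSymb Complex.I ψ) θ ξ =
          if θ = 1 then 1 else 0) ∧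
      (∀ (θ : G) (ξ : Ξ),
        compSymb (expSymb Complex.I ψ) (expSymb (-Complex.I) ψ) θ ξ =
          if θ = 1 then 1 else 0) ∧
      (∀ l : ℝ, 0 ≤ l →
        Summable fun k : ℕ =>
          (Nat.factorial k : ℝ)⁻¹ * snorm w wG ((fun s => adSymb s ψ)^[k] a) α l) ∧
      ∀ (θ : G) (ξ : Ξ),
        compSymb (expSymb (-Complex.I) ψ) (compSymb a (expSymb Complex.I ψ)) θ ξ =
          ∑' k : ℕ, (Nat.factorial k : ℂ)⁻¹ * (fun s => adSymb s ψ)^[k] a θ ξ := by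
  have hW := IsAdmissibleWeight.of_iSup_abs_sub hw hwG hbdd
  exact ⟨fun l hl => summable_snorm_powSymb hW hordψ hl,
    compSymb_expSymb_expSymb_of_add_eq_zero hW hordψ (neg_add_cancel _),
    compSymb_expSymb_expSymb_of_add_eq_zero hW hordψ (add_neg_cancel _),
    fun l hl => summable_snorm_iterate_adSymb hW hordψ horda hl,
    fun θ ξ => (hasSum_iterate_adSymb hW hordψ horda θ ξ).tsum_eq.symm⟩

/-- for a bounded symmetric `Ψ` of order `0`, the exponential series for
`exp(iΨ)` converges absolutely in every symbol norm `⦀·⦀_l^{(0)}`, `exp(iΨ)` is unitary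
(its composition with `exp(−iΨ) = exp(iΨ)†` on either side is the identity symbol), and
for any `A` of order `α` the gauge transform has the absolutely convergent expansion
`exp(−iΨ) A exp(iΨ) = Σ_k ad^k(A;Ψ)/k!` with `ad(A;Ψ) = i(AΨ − ΨA)`. -/
theorem stmt12 [Nonempty Ξ] [Group G] [MulAction G Ξ]
    (w : Ξ → ℝ) (hw : ∀ ξ, 1 ≤ w ξ)
    (wG : G → ℝ) (hwG : ∀ g : G, wG g = 1 + ⨆ ξ : Ξ, |w (g • ξ) - w ξ|)
    (hbdd : ∀ g : G, BddAbove (Set.range fun ξ : Ξ => |w (g • ξ) - w ξ|))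
    (hfree : ∀ (g : G) (ξ : Ξ), g • ξ = ξ → g = 1)
    (ψ : G → Ξ → ℂ) (Θψ : Set G) (hΘψ : IsAPSymbol ψ Θψ)
    (hsym : ∀ (g : G) (ξ : Ξ), ψ g ξ = (starRingEnd ℂ) (ψ g⁻¹ (g • ξ)))
    (hordψ : HasOrder w wG ψ 0)
    (a : G → Ξ → ℂ) (Θa : Set G) (hΘa : IsAPSymbol a Θa)
    (α : ℝ) (horda : HasOrder w wG a α) :
    (∀ l : ℝ, 0 ≤ l →
        Summable fun k : ℕ =>
          (Nat.factorial k : ℝ)⁻¹ * snorm w wG (powSymb ψ k) 0 l) ∧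
      (∀ (θ : G) (ξ : Ξ),
        compSymb (expSymb (-Complex.I) ψ) (expSymb Complex.I ψ) θ ξ =
          if θ = 1 then 1 else 0) ∧
      (∀ (θ : G) (ξ : Ξ),
        compSymb (expSymb Complex.I ψ) (expSymb (-Complex.I) ψ) θ ξ =
          if θ = 1 then 1 else 0) ∧
      (∀ l : ℝ, 0 ≤ l →
        Summable fun k : ℕ =>
          (Nat.factorial k : ℝ)⁻¹ * snorm w wG ((fun s => adSymb s ψ)^[k] a) α l) ∧
      ∀ (θ : G) (ξ : Ξ),
        compSymb (expSymb (-Complex.I) ψ) (compSymb a (expSymb Complex.I ψ)) θ ξ =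
          ∑' k : ℕ, (Nat.factorial k : ℂ)⁻¹ * (fun s => adSymb s ψ)^[k] a θ ξ :=
  stmt12_general w hw wG hwG hbdd ψ hordψ a α horda
end
end
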